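/- arXiv:2104.10672 — 5 statements merged into one kernel-verified Lean document; each statement's English description precedes it below -/
import Mathlib

section
/- If 𝓡 is a countably infinite collection of pairwise disjoint, pairwise equivalent rays in a graph G, then there exists a ray S in G that meets every ray of 𝓡 infinitely often (i.e., S shares infinitely many vertices with each member of 𝓡). -/
/-!
The transversal ray is the union of an increasing sequence of finite paths, the `m`-th of which
ends on the ray `𝓡 (unpair m).1`, so that every ray is visited infinitely often. The invariant is
that the current path ends at `𝓡 i a` and meets `𝓡 i` only at indices `≤ a`. To move on to `𝓡 j`,
choose one of the infinitely many disjoint `𝓡 i`–`𝓡 j` paths avoiding the finite set formed by the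
current path and initial segments of `𝓡 i` and `𝓡 j`; reach it by walking forward along `𝓡 i`,
and stop at the last vertex of `𝓡 j` on the way, which restores the invariant for `𝓡 j`.
-/

/-- `f` is a ray (one-way infinite path) in `G`. -/
def IsRay {V : Type*} (G : SimpleGraph V) (f : ℕ → V) : Prop :=
  Function.Injective f ∧ ∀ n, G.Adj (f n) (f (n + 1))

/-- Two rays are equivalent: there are infinitely many pairwise vertex-disjoint
paths in `G`, each with one endpoint on `f` and the other on `g`. -/
def RayEquiv {V : Type*} (G : SimpleGraph V) (f g : ℕ → V) : Prop :=
  ∃ (u v : ℕ → V) (p : ∀ i : ℕ, G.Walk (u i) (v i)),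
    (∀ i, (p i).IsPath) ∧ (∀ i, u i ∈ Set.range f) ∧ (∀ i, v i ∈ Set.range g) ∧
    ∀ i j, i ≠ j → ∀ x, x ∈ (p i).support → x ∉ (p j).support

open SimpleGraph

section

variable {V : Type*} {G : SimpleGraph V}

namespace SimpleGraph.Walk

theorem IsPath.append_of_support_inter {u v w : V} {p : G.Walk u v} {q : G.Walk v w}
    (hp : p.IsPath) (hq : q.IsPath) (h : ∀ x ∈ q.support, x ∈ p.support → x = v) :
    (p.append q).IsPath := by
  rw [isPath_def, support_append, List.nodup_append]
  have hq' := hq.support_nodup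
  rw [← cons_tail_support] at hq'
  refine ⟨hp.support_nodup, (List.nodup_cons.mp hq').2, fun x hxp y hyq hxy => ?_⟩
  subst hxy
  rw [h x (List.mem_of_mem_tail hyq) hxp] at hyq
  exact (List.nodup_cons.mp hq').1 hyq

def ofAdjSucc (f : ℕ → V) (hf : ∀ n, G.Adj (f n) (f (n + 1))) (a : ℕ) :
    (d : ℕ) → G.Walk (f a) (f (a + d))
  | 0 => nil
  | d + 1 => (ofAdjSucc f hf a d).concat (hf (a + d))

theorem exists_ge_of_mem_support_ofAdjSucc {f : ℕ → V} {hf : ∀ n, G.Adj (f n) (f (n + 1))}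
    {a d : ℕ} {x : V} (hx : x ∈ (ofAdjSucc f hf a d).support) : ∃ t, a ≤ t ∧ f t = x := by
  induction d with
  | zero =>
    rw [ofAdjSucc, support_nil, List.mem_singleton] at hx
    exact ⟨a, le_rfl, hx.symm⟩
  | succ d ih =>
    rw [ofAdjSucc, support_concat, List.mem_append, List.mem_singleton] at hx
    rcases hx with hx | rfl
    · exact ih hx
    · exact ⟨a + (d + 1), by omega, rfl⟩

theorem exists_isPath_to_last_visit {g : ℕ → V} (hg : Function.Injective g) {u : V} {m : ℕ}
    (Q : G.Walk u (g m)) :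
    ∃ b, m ≤ b ∧ ∃ w : G.Walk u (g b), w.IsPath ∧ (∀ x ∈ w.support, x ∈ Q.support) ∧
      ∀ t, g t ∈ w.support → t ≤ b := by
  classical
  set T := {t | g t ∈ Q.support}
  have hT : BddAbove T := (Q.support.finite_toSet.preimage hg.injOn).bddAbove
  have hmT : m ∈ T := Q.end_mem_support
  have hbT : sSup T ∈ T := Nat.sSup_mem ⟨m, hmT⟩ hT
  let w := (Q.takeUntil _ hbT).bypass
  have hwQ : ∀ x ∈ w.support, x ∈ Q.support := fun x hx =>
    Q.support_takeUntil_subset_support hbT (support_bypass_subset_support _ hx)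
  exact ⟨sSup T, le_csSup hT hmT, w, bypass_isPath _, hwQ,
    fun t ht => le_csSup hT (hwQ _ ht)⟩

end SimpleGraph.Walk

theorem RayEquiv.exists_walk_avoiding {f g : ℕ → V} (h : RayEquiv G f g) {F : Set V}
    (hF : F.Finite) : ∃ n m, ∃ q : G.Walk (f n) (g m), ∀ x ∈ q.support, x ∉ F := by
  obtain ⟨u, v, p, -, hu, hv, hdisj⟩ := h
  have hmeet : {k | ∃ x ∈ F, x ∈ (p k).support}.Finite := by
    refine (hF.biUnion fun x _ => ?_).subset fun k ⟨x, hxF, hxk⟩ => Set.mem_biUnion hxF hxk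
    -- each vertex lies on at most one of the disjoint paths
    exact Set.Subsingleton.finite fun k hk l hl => by_contra fun hkl => hdisj k l hkl x hk hl
  obtain ⟨k, hk⟩ := hmeet.infinite_compl.nonempty
  obtain ⟨n, hn⟩ := hu k
  obtain ⟨m, hm⟩ := hv k
  exact ⟨n, m, (p k).copy hn.symm hm.symm, fun x hx hxF => hk ⟨x, hxF, by simpa using hx⟩⟩

theorem exists_ray_of_growing_paths {u : V} {v : ℕ → V} (P : ∀ m, G.Walk u (v m))
    (hP : ∀ m, (P m).IsPath) (hlen : ∀ m, (P m).length < (P (m + 1)).length)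
    (hext : ∀ m, ∀ t ≤ (P m).length, (P (m + 1)).getVert t = (P m).getVert t) :
    ∃ S : ℕ → V, IsRay G S ∧ ∀ m, S (P m).length = v m := by
  have hmono : StrictMono fun m => (P m).length := strictMono_nat_of_lt_succ hlen
  have hstable : ∀ m m', m ≤ m' → ∀ t ≤ (P m).length, (P m').getVert t = (P m).getVert t := by
    intro m m' hmm' t ht
    induction m', hmm' using Nat.le_induction with
    | base => rfl
    | succ m' hmm' ih => rw [hext m' t (ht.trans (hmono.monotone hmm')), ih]
  have hdiag : ∀ m, ∀ t ≤ (P m).length, (P t).getVert t = (P m).getVert t := fun m t ht => by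
    rw [← hstable t (max m t) (le_max_right _ _) t (hmono.id_le t),
      hstable m (max m t) (le_max_left _ _) t ht]
  refine ⟨fun t => (P t).getVert t, ⟨fun t t' htt' => ?_, fun t => ?_⟩, fun m => ?_⟩
  · have ht : t ≤ (P (max t t')).length := (le_max_left t t').trans (hmono.id_le _)
    have ht' : t' ≤ (P (max t t')).length := (le_max_right t t').trans (hmono.id_le _)
    simp only [hdiag _ t ht, hdiag _ t' ht'] at htt'
    exact (hP _).getVert_injOn ht ht' htt'
  · have ht : t + 1 ≤ (P (t + 1)).length := hmono.id_le _
    show G.Adj ((P t).getVert t) ((P (t + 1)).getVert (t + 1))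
    rw [hdiag (t + 1) t (by omega)]
    exact (P (t + 1)).adj_getVert_succ ht
  · simp only [hdiag m _ le_rfl, Walk.getVert_length]

theorem Nat.infinite_setOf_unpair_fst_eq (i : ℕ) : {m | (Nat.unpair m).1 = i}.Infinite :=
  Set.infinite_of_injective_forall_mem (f := Nat.pair i) (fun _ _ h => (Nat.pair_eq_pair.mp h).2)
    fun l => by simp [Nat.unpair_pair]

/-- The invariant of the construction: the tail of `f` beyond `pos` is still unvisited. -/
structure TailFreePath (G : SimpleGraph V) (u : V) (f : ℕ → V) where
  pos : ℕ
  walk : G.Walk u (f pos)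
  isPath : walk.IsPath
  le_pos : ∀ t, f t ∈ walk.support → t ≤ pos

namespace TailFreePath

def nil {f : ℕ → V} (hf : Function.Injective f) : TailFreePath G (f 0) f :=
  ⟨0, Walk.nil, Walk.IsPath.nil, fun t ht => by
    rw [Walk.support_nil, List.mem_singleton] at ht; exact (hf ht).le⟩

variable {u : V} {f g : ℕ → V}

theorem exists_bridge (hf : ∀ n, G.Adj (f n) (f (n + 1))) (hg : Function.Injective g)
    (hfg : RayEquiv G f g) (s : TailFreePath G u f) (c : ℕ) :
    ∃ b, c < b ∧ ∃ w : G.Walk (f s.pos) (g b), w.IsPath ∧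
      (∀ x ∈ w.support, x ∈ s.walk.support → x = f s.pos) ∧ ∀ t, g t ∈ w.support → t ≤ b := by
  obtain ⟨n, m, q, hq⟩ := hfg.exists_walk_avoiding <|
    (s.walk.support.finite_toSet.union ((Set.finite_Iic s.pos).image f)).union
      ((Set.finite_Iic c).image g)
  have hn : s.pos < n := not_le.mp fun h => hq _ q.start_mem_support (.inl (.inr ⟨n, h, rfl⟩))
  have hm : c < m := not_le.mp fun h => hq _ q.end_mem_support (.inr ⟨m, h, rfl⟩)
  let Q : G.Walk (f s.pos) (g m) :=
    ((Walk.ofAdjSucc f hf s.pos (n - s.pos)).copy rfl (by congr 1; omega)).append q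
  have hQ : ∀ x ∈ Q.support, x ∈ s.walk.support → x = f s.pos := by
    intro x hx hxs
    rcases (Walk.mem_support_append_iff _ _).mp hx with hx | hx
    · obtain ⟨t, hat, rfl⟩ := Walk.exists_ge_of_mem_support_ofAdjSucc (by simpa using hx)
      rw [le_antisymm (s.le_pos t hxs) hat]
    · exact absurd (.inl (.inl hxs)) (hq x hx)
  obtain ⟨b, hmb, w, hw, hwQ, hwb⟩ := Walk.exists_isPath_to_last_visit hg Q
  exact ⟨b, hm.trans_le hmb, w, hw, fun x hx => hQ x (hwQ x hx), hwb⟩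

theorem exists_extend (hf : ∀ n, G.Adj (f n) (f (n + 1))) (hg : Function.Injective g)
    (hfg : RayEquiv G f g) (s : TailFreePath G u f) :
    ∃ s' : TailFreePath G u g, s.walk.length < s'.walk.length ∧
      ∀ t ≤ s.walk.length, s'.walk.getVert t = s.walk.getVert t := by
  obtain ⟨c, hc⟩ := (s.walk.support.finite_toSet.preimage hg.injOn).bddAbove
  obtain ⟨b, hcb, w, hw, hws, hwb⟩ := s.exists_bridge hf hg hfg c
  have hw_pos : 0 < w.length := by
    refine Nat.pos_of_ne_zero fun h0 => ?_
    have hb : g b ∈ s.walk.support := Walk.eq_of_length_eq_zero h0 ▸ s.walk.end_mem_support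
    exact absurd (hc hb) (not_le.mpr hcb)
  refine ⟨⟨b, s.walk.append w, s.isPath.append_of_support_inter hw hws, fun t ht => ?_⟩,
    by simp [hw_pos], fun t ht => by simp [Walk.getVert_append', ht]⟩
  rcases (Walk.mem_support_append_iff _ _).mp ht with ht | ht
  · exact (hc ht).trans hcb.le
  · exact hwb t ht

end TailFreePath

end

theorem exists_transversal_ray_general {V : Type*} (G : SimpleGraph V) (𝓡 : ℕ → ℕ → V)
    (hray : ∀ i, IsRay G (𝓡 i))
    (hequiv : ∀ i j, RayEquiv G (𝓡 i) (𝓡 j)) :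
    ∃ S : ℕ → V, IsRay G S ∧ ∀ i, {n : ℕ | S n ∈ Set.range (𝓡 i)}.Infinite := by
  let ray (m : ℕ) : ℕ → V := 𝓡 (Nat.unpair m).1
  have step (m : ℕ) (s : TailFreePath G (ray 0 0) (ray m)) :
      ∃ s' : TailFreePath G (ray 0 0) (ray (m + 1)), s.walk.length < s'.walk.length ∧
        ∀ t ≤ s.walk.length, s'.walk.getVert t = s.walk.getVert t :=
    s.exists_extend (hray _).2 (hray _).1 (hequiv _ _)
  choose next hlen hext using step
  let P (m : ℕ) : TailFreePath G (ray 0 0) (ray m) :=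
    Nat.rec (TailFreePath.nil (hray _).1) next m
  obtain ⟨S, hS, hSP⟩ := exists_ray_of_growing_paths (fun m => (P m).walk)
    (fun m => (P m).isPath) (fun m => hlen m (P m)) (fun m => hext m (P m))
  have hinj : Function.Injective fun m => (P m).walk.length :=
    (strictMono_nat_of_lt_succ fun m => hlen m (P m)).injective
  refine ⟨S, hS, fun i => ((Nat.infinite_setOf_unpair_fst_eq i).image hinj.injOn).mono ?_⟩
  rintro _ ⟨m, rfl, rfl⟩
  exact ⟨(P m).pos, (hSP m).symm⟩

/-- For a countably infinite collection of pairwise disjoint, pairwise equivalent rays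
there is a ray `S` meeting every member of the collection infinitely often. -/
theorem exists_transversal_ray {V : Type*} (G : SimpleGraph V) (𝓡 : ℕ → ℕ → V)
    (hray : ∀ i, IsRay G (𝓡 i))
    (hdisj : ∀ i j, i ≠ j → Disjoint (Set.range (𝓡 i)) (Set.range (𝓡 j)))
    (hequiv : ∀ i j, RayEquiv G (𝓡 i) (𝓡 j)) :
    ∃ S : ℕ → V, IsRay G S ∧ ∀ i, {n : ℕ | S n ∈ Set.range (𝓡 i)}.Infinite :=
  exists_transversal_ray_general G 𝓡 hray hequiv
end

section
/- Let 𝓡 be an infinite collection of disjoint rays and S a ray meeting every member of 𝓡 infinitely often. Then the auxiliary multigraph M(𝓡), with vertex set 𝓡 and with multiplicity of the edge R₁R₂ equal to the number of 𝓡-segments of S between R₁ and R₂, is infinitely edge-connected: any two distinct vertices of M(𝓡) are joined by infinitely many pairwise edge-disjoint paths (equivalently, no finite edge set disconnects M(𝓡)). -/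
/-- The subpath of `S` from index `a` to index `b` is an `𝓡`-segment between the rays
`𝓡 i` and `𝓡 j`: its endpoints lie on `𝓡 i` resp. `𝓡 j` and it is internally disjoint
from `⋃ 𝓡`. -/
def IsSegBetween {V : Type*} {ι : Type*} (𝓡 : ι → ℕ → V) (S : ℕ → V)
    (a b : ℕ) (i j : ι) : Prop :=
  a < b ∧ S a ∈ Set.range (𝓡 i) ∧ S b ∈ Set.range (𝓡 j) ∧
    ∀ k, a < k → k < b → ∀ l, S k ∉ Set.range (𝓡 l)

/-- The auxiliary graph on `𝓡` after deleting the finite set `F` of segments: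
`i` and `j` are adjacent if some `𝓡`-segment of `S` between them survives. -/
def auxGraph {V : Type*} {ι : Type*} (𝓡 : ι → ℕ → V) (S : ℕ → V)
    (F : Finset (ℕ × ℕ)) : SimpleGraph ι :=
  SimpleGraph.fromRel (fun i j =>
    ∃ a b : ℕ, (a, b) ∉ F ∧ IsSegBetween 𝓡 S a b i j)

/-- The auxiliary multigraph `M(𝓡)` is infinitely edge-connected: after removing any
finite set of edges (segments), any two rays of `𝓡` remain joined by a path. -/
theorem aux_multigraph_infinitely_edge_connected {V : Type*} {ι : Type*} [Infinite ι]
    (G : SimpleGraph V) (𝓡 : ι → ℕ → V) (S : ℕ → V)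
    (hray : ∀ i, IsRay G (𝓡 i)) (hS : IsRay G S)
    (hdisj : ∀ i j, i ≠ j → Disjoint (Set.range (𝓡 i)) (Set.range (𝓡 j)))
    (hmeets : ∀ i, {n : ℕ | S n ∈ Set.range (𝓡 i)}.Infinite) :
    ∀ F : Finset (ℕ × ℕ), ∀ i j : ι, (auxGraph 𝓡 S F).Reachable i j := by
  classical
  intro F i j
  set N := F.sup Prod.fst + 1 with hN
  have hNF : ∀ a b : ℕ, N ≤ a → (a, b) ∉ F := by
    intro a b ha hmem
    have := Finset.le_sup (f := Prod.fst) hmem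
    simp only at this
    omega
  have huniq : ∀ n (i j : ι), S n ∈ Set.range (𝓡 i) → S n ∈ Set.range (𝓡 j) → i = j := by
    intro n i j hi hj
    by_contra h
    exact Set.disjoint_left.mp (hdisj i j h) hi hj
  have key : ∀ d a b (i j : ι), b - a ≤ d → N ≤ a → a ≤ b →
      S a ∈ Set.range (𝓡 i) → S b ∈ Set.range (𝓡 j) → (auxGraph 𝓡 S F).Reachable i j := by
    intro d
    induction d with
    | zero =>
      intro a b i j hd hNa hab hi hj
      have hab' : a = b := by omega
      subst hab'
      exact (huniq a i j hi hj) ▸ SimpleGraph.Reachable.refl _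
    | succ d ih =>
      intro a b i j hd hNa hab hi hj
      rcases eq_or_lt_of_le hab with h | h
      · subst h
        exact (huniq a i j hi hj) ▸ SimpleGraph.Reachable.refl _
      · have hex : ∃ c, a < c ∧ ∃ l, S c ∈ Set.range (𝓡 l) := ⟨b, h, j, hj⟩
        set c := Nat.find hex with hc
        obtain ⟨hac, l, hl⟩ := Nat.find_spec hex
        have hcb : c ≤ b := Nat.find_min' hex ⟨h, j, hj⟩
        have hseg : IsSegBetween 𝓡 S a c i l := by
          refine ⟨hac, hi, hl, fun k hak hkc m hm => ?_⟩
          exact Nat.find_min hex hkc ⟨hak, m, hm⟩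
        have h1 : (auxGraph 𝓡 S F).Reachable i l := by
          by_cases hil : i = l
          · exact hil ▸ SimpleGraph.Reachable.refl _
          · exact SimpleGraph.Adj.reachable
              ⟨hil, Or.inl ⟨a, c, hNF a c hNa, hseg⟩⟩
        exact h1.trans (ih c b l j (by omega) (by omega) hcb hl hj)
  obtain ⟨a, ha, hNa⟩ := (hmeets i).exists_gt N
  obtain ⟨b, hb, hab⟩ := (hmeets j).exists_gt a
  exact key (b - a) a b i j le_rfl (by omega) (by omega) ha hb
end

section
/- Let M be an infinitely edge-connected multigraph on an infinite vertex set, and suppose only finitely many vertices of M have infinitely many neighbours. Then the spanning subgraph M_∞ obtained by keeping exactly those edges of infinite multiplicity has an infinite connected component. -/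
/-- A multigraph on `V`: a symmetric multiplicity function with no loops. -/
structure Multigraph (V : Type*) where
  mult : V → V → ℕ∞
  symm : ∀ v w, mult v w = mult w v
  loopless : ∀ v, mult v v = 0

/-- Infinitely many edges (counted with multiplicity) cross every bipartition:
either infinitely many pairs cross, or a crossing pair has infinite multiplicity. -/
def Multigraph.InfEdgeConn {V : Type*} (M : Multigraph V) : Prop :=
  ∀ A : Set V, A.Nonempty → Aᶜ.Nonempty →
    ({p : V × V | p.1 ∈ A ∧ p.2 ∉ A ∧ M.mult p.1 p.2 ≠ 0}.Infinite ∨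
      ∃ a ∈ A, ∃ b ∈ Aᶜ, M.mult a b = ⊤)

/-- The spanning simple subgraph of edges of infinite multiplicity. -/
def Multigraph.infSubgraph {V : Type*} (M : Multigraph V) : SimpleGraph V :=
  SimpleGraph.fromRel (fun v w => M.mult v w = ⊤)

/-- If an infinitely edge-connected multigraph on an infinite vertex set has only finitely
many vertices with infinitely many neighbours, then the subgraph of edges of infinite
multiplicity has an infinite connected component. -/
theorem infinite_component_of_finitely_many_infinite_degrees
    {V : Type*} [Infinite V] (M : Multigraph V)
    (hconn : M.InfEdgeConn)
    (hfin : {v : V | {w : V | M.mult v w ≠ 0}.Infinite}.Finite) :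
    ∃ C : M.infSubgraph.ConnectedComponent, C.supp.Infinite := by
  by_contra h
  push_neg at h
  set G := M.infSubgraph with hG
  have hc : ∀ C : G.ConnectedComponent, C.supp.Finite := fun C =>
    h C
  set D := {v : V | {w : V | M.mult v w ≠ 0}.Infinite} with hD
  have hS : (⋃ d ∈ D, (G.connectedComponentMk d).supp).Finite :=
    hfin.biUnion (fun d _ => hc _)
  obtain ⟨v, hv⟩ := hS.infinite_compl.nonempty
  set A := (G.connectedComponentMk v).supp with hA
  have hvA : v ∈ A := rfl
  have hAfin : A.Finite := hc _
  have hAD : ∀ a ∈ A, a ∉ D := by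
    intro a ha haD
    apply hv
    simp only [Set.mem_iUnion]
    refine ⟨a, haD, ?_⟩
    rw [SimpleGraph.ConnectedComponent.mem_supp_iff] at ha ⊢
    exact ha.symm
  have hcompl : Aᶜ.Nonempty := (hAfin.infinite_compl).nonempty
  rcases hconn A ⟨v, hvA⟩ hcompl with hinf | ⟨a, ha, b, hb, hab⟩
  · apply hinf
    have hsub : {p : V × V | p.1 ∈ A ∧ p.2 ∉ A ∧ M.mult p.1 p.2 ≠ 0} ⊆
        ⋃ a ∈ A, {a} ×ˢ {w : V | M.mult a w ≠ 0} := by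
      rintro ⟨x, y⟩ ⟨hx, _, hxy⟩
      simp only [Set.mem_iUnion, Set.mem_prod, Set.mem_singleton_iff]
      exact ⟨x, hx, rfl, hxy⟩
    refine Set.Finite.subset ?_ hsub
    refine hAfin.biUnion (fun a haA => ?_)
    have : {w : V | M.mult a w ≠ 0}.Finite := Set.not_infinite.mp (hAD a haA)
    exact (Set.finite_singleton a).prod this
  · have hne : a ≠ b := fun e => hb (e ▸ ha)
    have hadj : G.Adj a b := by
      rw [hG, Multigraph.infSubgraph, SimpleGraph.fromRel_adj]
      exact ⟨hne, Or.inl hab⟩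
    apply hb
    rw [SimpleGraph.ConnectedComponent.mem_supp_iff] at ha ⊢
    rw [← ha]
    exact (SimpleGraph.ConnectedComponent.sound hadj.reachable).symm
end

section
/- (Strengthened Halin grid theorem) For every infinite collection 𝓡 of pairwise disjoint, pairwise equivalent rays in a graph G, there is a subdivision of the hexagonal half-grid in G such that all its vertical rays belong to 𝓡. -/
/-- The hexagonal half-grid: all vertical edges of the half-grid, and every other
horizontal rung in a brick-wall pattern. -/
def hexHalfGrid : SimpleGraph (ℕ × ℕ) :=
  SimpleGraph.fromRel (fun a b =>
    (a.1 = b.1 ∧ b.2 = a.2 + 1) ∨ (a.2 = b.2 ∧ b.1 = a.1 + 1 ∧ (a.1 + a.2) % 2 = 0))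

/-- Each column of the hexagonal half-grid is a ray: consecutive vertices are adjacent. -/
lemma hexVert (n m : ℕ) : hexHalfGrid.Adj (n, m) (n, m + 1) := by
  refine ⟨by simp, Or.inl (Or.inl ⟨rfl, rfl⟩)⟩

/-- `(φ, P)` is a subdivision of `H` in `G`: branch vertices `φ` are injective, each edge
of `H` is represented by a path of `G` between its branch vertices, internally avoiding
all branch vertices, and distinct edge-paths meet only in common branch vertices. -/
def IsSubdivisionWith {α V : Type*} (H : SimpleGraph α) (G : SimpleGraph V)
    (φ : α → V) (P : ∀ ⦃a b : α⦄, H.Adj a b → G.Walk (φ a) (φ b)) : Prop :=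
  Function.Injective φ ∧
  (∀ ⦃a b : α⦄ (h : H.Adj a b), (P h).IsPath) ∧
  (∀ ⦃a b : α⦄ (h : H.Adj a b), ∀ v ∈ (P h).support, v ∈ Set.range φ → v = φ a ∨ v = φ b) ∧
  (∀ ⦃a b c d : α⦄ (h₁ : H.Adj a b) (h₂ : H.Adj c d), s(a, b) ≠ s(c, d) →
    ∀ v, v ∈ (P h₁).support → v ∈ (P h₂).support →
      (v = φ a ∨ v = φ b) ∧ (v = φ c ∨ v = φ d))



open SimpleGraph

section Util
variable {V : Type*} {G : SimpleGraph V}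

/-- Walk along a "ray-like" function from `f a` to `f (a+d)`. -/
def raySeg (f : ℕ → V) (hadj : ∀ n, G.Adj (f n) (f (n + 1))) (a : ℕ) :
    (d : ℕ) → G.Walk (f a) (f (a + d))
  | 0 => SimpleGraph.Walk.nil
  | d + 1 => (raySeg f hadj a d).concat (hadj (a + d))

lemma raySeg_support (f : ℕ → V) (hadj : ∀ n, G.Adj (f n) (f (n + 1))) (a d : ℕ) :
    ∀ v, v ∈ (raySeg f hadj a d).support ↔ ∃ i, i ≤ d ∧ v = f (a + i) := by
  induction d with
  | zero => intro v; simp [raySeg]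
  | succ d ih =>
    intro v
    rw [raySeg, Walk.support_concat]
    simp only [List.concat_eq_append, List.mem_append, List.mem_singleton]
    constructor
    · rintro (h | rfl)
      · obtain ⟨i, hi, rfl⟩ := (ih v).1 h
        exact ⟨i, by omega, rfl⟩
      · exact ⟨d + 1, le_rfl, rfl⟩
    · rintro ⟨i, hi, rfl⟩
      rcases Nat.lt_or_ge i (d + 1) with h | h
      · exact Or.inl ((ih _).2 ⟨i, by omega, rfl⟩)
      · have : i = d + 1 := by omega
        subst this; exact Or.inr rfl

lemma raySeg_isPath (f : ℕ → V) (hf : Function.Injective f)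
    (hadj : ∀ n, G.Adj (f n) (f (n + 1))) (a d : ℕ) :
    (raySeg f hadj a d).IsPath := by
  induction d with
  | zero => exact Walk.IsPath.nil
  | succ d ih =>
    rw [raySeg]
    apply Walk.IsPath.mk'
    rw [Walk.support_concat, ← List.concat_eq_append]
    refine List.Nodup.concat ?_ ih.support_nodup
    intro hmem
    obtain ⟨i, hi, he⟩ := (raySeg_support f hadj a d _).1 hmem
    have := hf he
    omega

/-- First entry of a walk into a set `B` (the endpoint is in `B`). -/
lemma exists_firstEntry {u v : V} (p : G.Walk u v) (B : Set V) (hv : v ∈ B) :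
    ∃ (y : V) (_ : y ∈ B) (q : G.Walk u y),
      (∀ x ∈ q.support, x ∈ p.support) ∧ (∀ x ∈ q.support, x ∈ B → x = y) := by
  induction p with
  | nil => exact ⟨_, hv, Walk.nil, by simp, by simp⟩
  | @cons u w v h p ih =>
    by_cases hu : u ∈ B
    · refine ⟨u, hu, Walk.nil, by simp, by simp⟩
    · obtain ⟨y, hy, q, hsub, hfirst⟩ := ih hv
      refine ⟨y, hy, Walk.cons h q, ?_, ?_⟩
      · intro x hx
        rw [Walk.support_cons, List.mem_cons] at hx
        rw [Walk.support_cons]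
        rcases hx with rfl | hx
        · exact List.mem_cons_self
        · exact List.mem_cons_of_mem _ (hsub x hx)
      · intro x hx hxB
        rw [Walk.support_cons, List.mem_cons] at hx
        rcases hx with rfl | hx
        · exact absurd hxB hu
        · exact hfirst x hx hxB

/-- Truncate a walk to go from a last-exit of `A` to a first-entry of `B`. -/
lemma exists_trunc {u v : V} (p : G.Walk u v) (A B : Set V) (hu : u ∈ A) (hv : v ∈ B) :
    ∃ (x : V) (_ : x ∈ A) (y : V) (_ : y ∈ B) (q : G.Walk x y),
      (∀ z ∈ q.support, z ∈ p.support) ∧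
      (∀ z ∈ q.support, z ∈ B → z = y) ∧
      (∀ z ∈ q.support, z ∈ A → z = x) := by
  obtain ⟨y, hy, q₁, hsub₁, hfirst₁⟩ := exists_firstEntry p B hv
  obtain ⟨x, hx, q₂, hsub₂, hfirst₂⟩ := exists_firstEntry q₁.reverse A (by
    simpa using hu)
  refine ⟨x, hx, y, hy, q₂.reverse, ?_, ?_, ?_⟩
  · intro z hz
    rw [Walk.support_reverse, List.mem_reverse] at hz
    have := hsub₂ z hz
    rw [Walk.support_reverse, List.mem_reverse] at this
    exact hsub₁ z this
  · intro z hz hzB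
    rw [Walk.support_reverse, List.mem_reverse] at hz
    have := hsub₂ z hz
    rw [Walk.support_reverse, List.mem_reverse] at this
    exact hfirst₁ z this hzB
  · intro z hz hzA
    rw [Walk.support_reverse, List.mem_reverse] at hz
    exact hfirst₂ z hz hzA

/-- From a pairwise-disjoint infinite family of walks, one avoids any finite set. -/
lemma exists_avoid {u v : ℕ → V} (p : ∀ i : ℕ, G.Walk (u i) (v i))
    (hdisj : ∀ i j, i ≠ j → ∀ x, x ∈ (p i).support → x ∉ (p j).support)
    (X : Finset V) : ∃ i, ∀ x ∈ (p i).support, x ∉ X := by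
  by_contra hc
  push_neg at hc
  choose x hx hX using hc
  have hinj : Function.Injective x := by
    intro i j hij
    by_contra hne
    exact hdisj i j hne (x i) (hx i) (hij ▸ hx j)
  obtain ⟨i, j, hne, he⟩ :=
    Finite.exists_ne_map_eq_of_infinite (fun i : ℕ => (⟨x i, hX i⟩ : X))
  exact hne (hinj (by simpa using he))

/-- Positions of a finite set on an injective ray are bounded. -/
lemma exists_posBound (f : ℕ → V) (hf : Function.Injective f) (X : Finset V) :
    ∃ b : ℕ, ∀ q, f q ∈ X → q < b := by
  have hfin : (f ⁻¹' (X : Set V)).Finite :=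
    Set.Finite.preimage (hf.injOn) X.finite_toSet
  obtain ⟨b, hb⟩ := hfin.bddAbove
  exact ⟨b + 1, fun q hq => Nat.lt_succ_of_le (hb hq)⟩

end Util
section Web

variable {V : Type*} (G : SimpleGraph V) (R : ℕ → ℕ → V)

/-- A `Web` at level `n`: a finite connected configuration meeting rays `0..n` high,
with a quotient metric `δ` on ray indices and a rung-extraction facility. -/
structure Web (n : ℕ) where
  β : ℕ
  hβ : n ≤ β
  verts : Finset V
  touch : ∀ m, m ≤ n → ∃ p, R m p ∈ verts
  high : ∀ m, m ≤ n → ∀ p, R m p ∈ verts → β < p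
  dd : ℕ → ℕ → ℕ
  ddsymm : ∀ a b, dd a b = dd b a
  ddtri : ∀ a b c, a ≤ n → b ≤ n → c ≤ n → dd a b ≤ dd a c + dd c b
  ddzero : ∀ a b, a ≤ n → b ≤ n → dd a b = 0 → a = b
  rung : ∀ a b, a ≤ n → b ≤ n → a ≠ b → ∀ J : Finset ℕ,
    (∀ j ∈ J, j ≤ n ∧ dd a b < dd a j + dd j b) →
    ∃ x y, β < x ∧ β < y ∧ ∃ q : G.Walk (R a x) (R b y), q.IsPath ∧
      (∀ v ∈ q.support, v ∈ verts) ∧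
      (∀ v ∈ q.support, ∀ j ∈ J, v ∉ Set.range (R j)) ∧
      (∀ v ∈ q.support, v ∈ Set.range (R a) → v = R a x) ∧
      (∀ v ∈ q.support, v ∈ Set.range (R b) → v = R b y)

end Web
section Web

variable {V : Type*} {G : SimpleGraph V} {R : ℕ → ℕ → V}

/-- Labeling map for the quotient: vertices on ray `m ≤ n` are labeled `inl m`. -/
noncomputable def lab (R : ℕ → ℕ → V) (n : ℕ) (v : V) : ℕ ⊕ V :=
  letI := Classical.dec (∃ m, m ≤ n ∧ v ∈ Set.range (R m))
  if h : ∃ m, m ≤ n ∧ v ∈ Set.range (R m) then Sum.inl h.choose else Sum.inr v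

variable (hdisR : ∀ m m' p q, R m p = R m' q → m = m')

include hdisR in
lemma lab_ray {n : ℕ} {m : ℕ} (hm : m ≤ n) (p : ℕ) : lab R n (R m p) = Sum.inl m := by
  have hex : ∃ m', m' ≤ n ∧ R m p ∈ Set.range (R m') := ⟨m, hm, Set.mem_range_self p⟩
  rw [lab, dif_pos hex]
  obtain ⟨q, hq⟩ := hex.choose_spec.2
  exact congrArg Sum.inl (hdisR _ _ _ _ hq.symm).symm

lemma lab_inl {n : ℕ} {v : V} {m : ℕ} (h : lab R n v = Sum.inl m) :
    m ≤ n ∧ v ∈ Set.range (R m) := by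
  rw [lab] at h
  split at h
  · next hex =>
      obtain ⟨rfl⟩ : hex.choose = m := Sum.inl.inj h
      exact hex.choose_spec
  · exact absurd h (by simp)

lemma lab_inr {n : ℕ} {v w : V} (h : lab R n v = Sum.inr w) : v = w := by
  rw [lab] at h
  split at h
  · exact absurd h (by simp)
  · exact Sum.inr.inj h

/-- The quotient graph on labels. -/
def webGraph (G : SimpleGraph V) (R : ℕ → ℕ → V) (n : ℕ) (verts : Finset V) : SimpleGraph (ℕ ⊕ V) :=
  SimpleGraph.fromRel (fun ℓ ℓ' =>
    ∃ u w : V, u ∈ verts ∧ w ∈ verts ∧ G.Adj u w ∧ lab R n u = ℓ ∧ lab R n w = ℓ')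

lemma webGraph_reach {n : ℕ} {verts : Finset V} {x y : V} (q : G.Walk x y)
    (hq : ∀ z ∈ q.support, z ∈ verts) :
    (webGraph G R n verts).Reachable (lab R n x) (lab R n y) := by
  induction q with
  | nil => exact SimpleGraph.Reachable.refl _
  | @cons u u' y h q ih =>
    have hu : u ∈ verts := hq u (by simp)
    have hu' : u' ∈ verts := hq u' (by simp)
    have hrest : ∀ z ∈ q.support, z ∈ verts := fun z hz =>
      hq z (by rw [SimpleGraph.Walk.support_cons]; exact List.mem_cons_of_mem _ hz)
    by_cases he : lab R n u = lab R n u'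
    · rw [he]; exact ih hrest
    · refine SimpleGraph.Reachable.trans (SimpleGraph.Adj.reachable ?_) (ih hrest)
      rw [webGraph, SimpleGraph.fromRel_adj]
      exact ⟨he, Or.inl ⟨u, u', hu, hu', h, rfl, rfl⟩⟩

/-- De-contraction: a walk in the quotient graph lifts to a walk in `G` through `verts`,
provided nodes can be traversed internally (`conn`). -/
lemma webGraph_decon {n : ℕ} {verts : Finset V}
    (conn : ∀ (ℓ : ℕ ⊕ V) (v u : V), v ∈ verts → u ∈ verts → lab R n v = ℓ → lab R n u = ℓ →
      ∃ c : G.Walk v u, ∀ z ∈ c.support, z ∈ verts ∧ lab R n z = ℓ) :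
    ∀ {ℓ ℓ' : ℕ ⊕ V} (Wk : (webGraph G R n verts).Walk ℓ ℓ') (v : V),
      v ∈ verts → lab R n v = ℓ →
      ∃ w, w ∈ verts ∧ lab R n w = ℓ' ∧ ∃ q : G.Walk v w,
        ∀ z ∈ q.support, z ∈ verts ∧ lab R n z ∈ Wk.support := by
  intro ℓ ℓ' Wk
  induction Wk with
  | nil =>
    intro v hv hl
    refine ⟨v, hv, hl, SimpleGraph.Walk.nil, ?_⟩
    intro z hz
    rw [SimpleGraph.Walk.support_nil, List.mem_singleton] at hz
    subst hz
    exact ⟨hv, by simp [hl]⟩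
  | @cons ℓ ℓ₁ ℓ'' hadj Wk ih =>
    intro v hv hl
    rw [webGraph, SimpleGraph.fromRel_adj] at hadj
    obtain ⟨hne, hrel⟩ := hadj
    have hedge : ∃ u w : V, u ∈ verts ∧ w ∈ verts ∧ G.Adj u w ∧
        lab R n u = ℓ ∧ lab R n w = ℓ₁ := by
      rcases hrel with ⟨u, w, hu, hw, huw, hlu, hlw⟩ | ⟨u, w, hu, hw, huw, hlu, hlw⟩
      · exact ⟨u, w, hu, hw, huw, hlu, hlw⟩
      · exact ⟨w, u, hw, hu, huw.symm, hlw, hlu⟩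
    obtain ⟨u, w, hu, hw, huw, hlu, hlw⟩ := hedge
    obtain ⟨c, hc⟩ := conn ℓ v u hv hu hl hlu
    obtain ⟨wfin, hwfin, hlwfin, q', hq'⟩ := ih w hw hlw
    refine ⟨wfin, hwfin, hlwfin, c.append (SimpleGraph.Walk.cons huw q'), ?_⟩
    intro z hz
    rw [SimpleGraph.Walk.mem_support_append_iff] at hz
    rcases hz with hz | hz
    · obtain ⟨h1, h2⟩ := hc z hz
      exact ⟨h1, by rw [SimpleGraph.Walk.support_cons, h2]; exact List.mem_cons_self⟩
    · rw [SimpleGraph.Walk.support_cons, List.mem_cons] at hz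
      rcases hz with rfl | hz
      · exact ⟨hu, by rw [SimpleGraph.Walk.support_cons, hlu]; exact List.mem_cons_self⟩
      · obtain ⟨h1, h2⟩ := hq' z hz
        exact ⟨h1, by rw [SimpleGraph.Walk.support_cons]; exact List.mem_cons_of_mem _ h2⟩

end Web
section Build

open SimpleGraph

variable {V : Type*} {G : SimpleGraph V} {R : ℕ → ℕ → V}

theorem buildWeb
    (hinj : ∀ m, Function.Injective (R m))
    (hadjR : ∀ m k, G.Adj (R m k) (R m (k + 1)))
    (hdisR : ∀ m m' p q, R m p = R m' q → m = m')
    (hfam : ∀ (j : ℕ) (X : Finset V), 1 ≤ j → ∃ x y, ∃ q : G.Walk (R 0 x) (R j y),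
      q.IsPath ∧ ∀ z ∈ q.support, z ∉ X)
    (O : Finset V) (n : ℕ) :
    ∃ w : Web G R n, ∀ v ∈ w.verts, v ∉ O := by
  classical
  choose bnd hbnd using fun m => exists_posBound (R m) (hinj m) O
  set β := n + (Finset.range (n + 1)).sup bnd with hβdef
  have hβO : ∀ m, m ≤ n → ∀ q, R m q ∈ O → q < β := by
    intro m hm q hq
    have h1 := hbnd m q hq
    have h2 : bnd m ≤ (Finset.range (n + 1)).sup bnd :=
      Finset.le_sup (Finset.mem_range.2 (by omega))
    omega
  have hnβ : n ≤ β := Nat.le_add_right _ _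
  rcases Nat.eq_zero_or_pos n with rfl | hn
  · refine ⟨⟨β, hnβ, {R 0 (β + 1)}, ?_, ?_, fun _ _ => 0, fun _ _ => rfl, ?_, ?_, ?_⟩, ?_⟩
    · intro m hm
      interval_cases m
      exact ⟨β + 1, Finset.mem_singleton_self _⟩
    · intro m hm p hp
      rw [Finset.mem_singleton] at hp
      interval_cases m
      have := hinj 0 hp
      omega
    · intro a b c _ _ _; exact Nat.zero_le _
    · intro a b ha hb _; omega
    · intro a b ha hb hab J hJ
      exact absurd (by omega) hab
    · intro v hv hvO
      rw [Finset.mem_singleton] at hv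
      subst hv
      have := hβO 0 le_rfl (β + 1) hvO
      omega
  · -- main construction
    set O' := O ∪ (Finset.range (n + 1)).biUnion
        (fun m => (Finset.range (β + 1)).image (R m)) with hO'def
    have hO'low : ∀ m, m ≤ n → ∀ q, q ≤ β → R m q ∈ O' := by
      intro m hm q hq
      refine Finset.mem_union_right _ (Finset.mem_biUnion.2 ⟨m, Finset.mem_range.2 (by omega),
        Finset.mem_image.2 ⟨q, Finset.mem_range.2 (by omega), rfl⟩⟩)
    have hOsub : O ⊆ O' := Finset.subset_union_left
    choose px py pw hpath havoid using fun j : ℕ => hfam (j + 1) O' (by omega)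
    set bigSupp := (Finset.range n).biUnion (fun j => (pw j).support.toFinset) with hbigdef
    have hbig_mem : ∀ v, v ∈ bigSupp ↔ ∃ j, j < n ∧ v ∈ (pw j).support := by
      intro v
      simp only [hbigdef, Finset.mem_biUnion, Finset.mem_range, List.mem_toFinset]
    have hbig_avoid : ∀ v ∈ bigSupp, v ∉ O' := by
      intro v hv
      obtain ⟨j, hj, hmem⟩ := (hbig_mem v).1 hv
      exact havoid j v hmem
    have hbig_high : ∀ m, m ≤ n → ∀ q, R m q ∈ bigSupp → β < q := by
      intro m hm q hq
      by_contra hle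
      exact hbig_avoid _ hq (hO'low m hm q (by omega))
    choose bbnd hbbnd using fun m => exists_posBound (R m) (hinj m) bigSupp
    set tpos : ℕ → Finset ℕ := fun m =>
      (Finset.range (bbnd m)).filter (fun q => R m q ∈ bigSupp) with htposdef
    have htpos_mem : ∀ m q, q ∈ tpos m ↔ R m q ∈ bigSupp := by
      intro m q
      simp only [htposdef, Finset.mem_filter, Finset.mem_range]
      exact ⟨fun h => h.2, fun h => ⟨hbbnd m q h, h⟩⟩
    have htpos_ne : ∀ m, m ≤ n → (tpos m).Nonempty := by
      intro m hm
      cases m with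
      | zero => exact ⟨px 0, (htpos_mem 0 _).2 ((hbig_mem _).2
          ⟨0, hn, SimpleGraph.Walk.start_mem_support _⟩)⟩
      | succ mm => exact ⟨py mm, (htpos_mem _ _).2 ((hbig_mem _).2
          ⟨mm, by omega, SimpleGraph.Walk.end_mem_support _⟩)⟩
    set hull : ℕ → Finset V := fun m =>
      if h : (tpos m).Nonempty then
        (Finset.Icc ((tpos m).min' h) ((tpos m).max' h)).image (R m) else ∅ with hhulldef
    set verts := bigSupp ∪ (Finset.range (n + 1)).biUnion hull with hvertsdef
    have hull_sub : ∀ m, m ≤ n → hull m ⊆ verts := by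
      intro m hm v hv
      exact Finset.mem_union_right _ (Finset.mem_biUnion.2 ⟨m, Finset.mem_range.2 (by omega), hv⟩)
    have hbig_sub : bigSupp ⊆ verts := Finset.subset_union_left
    have vertsOnRay : ∀ m, m ≤ n → ∀ q, R m q ∈ verts →
        ∃ h : (tpos m).Nonempty, (tpos m).min' h ≤ q ∧ q ≤ (tpos m).max' h := by
      intro m hm q hq
      rcases Finset.mem_union.1 hq with hq' | hq'
      · have hmem := (htpos_mem m q).2 hq'
        exact ⟨⟨q, hmem⟩, Finset.min'_le _ _ hmem, Finset.le_max' _ _ hmem⟩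
      · obtain ⟨m', hm', hv⟩ := Finset.mem_biUnion.1 hq'
        rw [Finset.mem_range] at hm'
        by_cases h' : (tpos m').Nonempty
        · simp only [hhulldef, dif_pos h'] at hv
          obtain ⟨q', hq'', he⟩ := Finset.mem_image.1 hv
          obtain rfl : m' = m := hdisR m' m q' q he
          obtain rfl : q' = q := hinj m' he
          rw [Finset.mem_Icc] at hq''
          exact ⟨h', hq''.1, hq''.2⟩
        · simp only [hhulldef, dif_neg h'] at hv
          exact absurd hv (Finset.notMem_empty _)
    have verts_high : ∀ m, m ≤ n → ∀ q, R m q ∈ verts → β < q := by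
      intro m hm q hq
      obtain ⟨h, hmin, _⟩ := vertsOnRay m hm q hq
      have h1 : (tpos m).min' h ∈ tpos m := Finset.min'_mem _ _
      have h2 := hbig_high m hm _ ((htpos_mem m _).1 h1)
      omega
    have verts_touch : ∀ m, m ≤ n → ∃ p, R m p ∈ verts := by
      intro m hm
      obtain ⟨q, hq⟩ := htpos_ne m hm
      exact ⟨q, hbig_sub ((htpos_mem m q).1 hq)⟩
    have verts_O : ∀ v ∈ verts, v ∉ O := by
      intro v hv hvO
      rcases Finset.mem_union.1 hv with hv' | hv'
      · exact hbig_avoid v hv' (hOsub hvO)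
      · obtain ⟨m', hm', hvh⟩ := Finset.mem_biUnion.1 hv'
        rw [Finset.mem_range] at hm'
        by_cases h' : (tpos m').Nonempty
        · simp only [hhulldef, dif_pos h'] at hvh
          obtain ⟨q', hq', rfl⟩ := Finset.mem_image.1 hvh
          rw [Finset.mem_Icc] at hq'
          have h1 : (tpos m').min' h' ∈ tpos m' := Finset.min'_mem _ _
          have h2 := hbig_high m' (by omega) _ ((htpos_mem m' _).1 h1)
          have h3 := hβO m' (by omega) q' hvO
          omega
        · simp only [hhulldef, dif_neg h'] at hvh
          exact absurd hvh (Finset.notMem_empty _)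
    have hull_mem : ∀ m (h : (tpos m).Nonempty) q, (tpos m).min' h ≤ q →
        q ≤ (tpos m).max' h → R m q ∈ hull m := by
      intro m h q h1 h2
      simp only [hhulldef, dif_pos h]
      exact Finset.mem_image.2 ⟨q, Finset.mem_Icc.2 ⟨h1, h2⟩, rfl⟩
    have conn_le : ∀ (m p₁ p₂ : ℕ), p₁ ≤ p₂ → ∃ c : G.Walk (R m p₁) (R m p₂),
        ∀ z ∈ c.support, ∃ i, p₁ ≤ i ∧ i ≤ p₂ ∧ z = R m i := by
      intro m p₁ p₂ hle
      refine ⟨(raySeg (R m) (hadjR m) p₁ (p₂ - p₁)).copy rfl (congrArg (R m) (by omega)), ?_⟩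
      intro z hz
      rw [SimpleGraph.Walk.support_copy] at hz
      obtain ⟨i, hi, rfl⟩ := (raySeg_support _ _ _ _ z).1 hz
      exact ⟨p₁ + i, by omega, by omega, rfl⟩
    have conn : ∀ (ℓ : ℕ ⊕ V) (v u : V), v ∈ verts → u ∈ verts →
        lab R n v = ℓ → lab R n u = ℓ →
        ∃ c : G.Walk v u, ∀ z ∈ c.support, z ∈ verts ∧ lab R n z = ℓ := by
      intro ℓ v u hv hu hlv hlu
      match ℓ with
      | Sum.inr x =>
        obtain rfl : v = u := (lab_inr hlv).trans (lab_inr hlu).symm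
        refine ⟨SimpleGraph.Walk.nil, ?_⟩
        intro z hz
        rw [SimpleGraph.Walk.support_nil, List.mem_singleton] at hz
        subst hz
        exact ⟨hv, hlv⟩
      | Sum.inl m =>
        obtain ⟨hm, hvr⟩ := lab_inl hlv
        obtain ⟨_, hur⟩ := lab_inl hlu
        obtain ⟨q₁, rfl⟩ := hvr
        obtain ⟨q₂, rfl⟩ := hur
        obtain ⟨hne, h1min, h1max⟩ := vertsOnRay m hm q₁ hv
        obtain ⟨_, h2min, h2max⟩ := vertsOnRay m hm q₂ hu
        rcases le_or_gt q₁ q₂ with hle | hlt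
        · obtain ⟨c, hc⟩ := conn_le m q₁ q₂ hle
          refine ⟨c, ?_⟩
          intro z hz
          obtain ⟨i, hi1, hi2, rfl⟩ := hc z hz
          exact ⟨hull_sub m hm (hull_mem m hne i (by omega) (by omega)), lab_ray hdisR hm i⟩
        · obtain ⟨c, hc⟩ := conn_le m q₂ q₁ (by omega)
          refine ⟨c.reverse, ?_⟩
          intro z hz
          rw [SimpleGraph.Walk.support_reverse, List.mem_reverse] at hz
          obtain ⟨i, hi1, hi2, rfl⟩ := hc z hz
          exact ⟨hull_sub m hm (hull_mem m hne i (by omega) (by omega)), lab_ray hdisR hm i⟩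
    have reach0 : ∀ m, m ≤ n → (webGraph G R n verts).Reachable (Sum.inl 0) (Sum.inl m) := by
      intro m hm
      cases m with
      | zero => exact SimpleGraph.Reachable.refl _
      | succ j =>
        have hsupp : ∀ z ∈ (pw j).support, z ∈ verts := fun z hz =>
          hbig_sub ((hbig_mem z).2 ⟨j, by omega, hz⟩)
        have hr := webGraph_reach (R := R) (n := n) (verts := verts) (pw j) hsupp
        rwa [lab_ray hdisR (Nat.zero_le n), lab_ray hdisR hm] at hr
    have reachAll : ∀ a b, a ≤ n → b ≤ n →
        (webGraph G R n verts).Reachable (Sum.inl a) (Sum.inl b) :=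
      fun a b ha hb => (reach0 a ha).symm.trans (reach0 b hb)
    have hddsymm : ∀ a b : ℕ, (webGraph G R n verts).dist (Sum.inl a) (Sum.inl b) =
        (webGraph G R n verts).dist (Sum.inl b) (Sum.inl a) :=
      fun a b => SimpleGraph.dist_comm
    have hddtri : ∀ a b c : ℕ, a ≤ n → b ≤ n → c ≤ n →
        (webGraph G R n verts).dist (Sum.inl a) (Sum.inl b) ≤
        (webGraph G R n verts).dist (Sum.inl a) (Sum.inl c) +
        (webGraph G R n verts).dist (Sum.inl c) (Sum.inl b) := by
      intro a b c ha hb hc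
      obtain ⟨p1, hp1⟩ := (reachAll a c ha hc).exists_walk_length_eq_dist
      obtain ⟨p2, hp2⟩ := (reachAll c b hc hb).exists_walk_length_eq_dist
      have h := SimpleGraph.dist_le (p1.append p2)
      rwa [SimpleGraph.Walk.length_append, hp1, hp2] at h
    have hddzero : ∀ a b : ℕ, a ≤ n → b ≤ n →
        (webGraph G R n verts).dist (Sum.inl a) (Sum.inl b) = 0 → a = b := by
      intro a b ha hb h0
      obtain ⟨p, hp⟩ := (reachAll a b ha hb).exists_walk_length_eq_dist
      rw [h0] at hp
      exact Sum.inl.inj (SimpleGraph.Walk.eq_of_length_eq_zero hp)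
    have hrung : ∀ a b, a ≤ n → b ≤ n → a ≠ b → ∀ J : Finset ℕ,
        (∀ j ∈ J, j ≤ n ∧ (webGraph G R n verts).dist (Sum.inl a) (Sum.inl b) <
          (webGraph G R n verts).dist (Sum.inl a) (Sum.inl j) +
          (webGraph G R n verts).dist (Sum.inl j) (Sum.inl b)) →
        ∃ x y, β < x ∧ β < y ∧ ∃ q : G.Walk (R a x) (R b y), q.IsPath ∧
          (∀ v ∈ q.support, v ∈ verts) ∧
          (∀ v ∈ q.support, ∀ j ∈ J, v ∉ Set.range (R j)) ∧
          (∀ v ∈ q.support, v ∈ Set.range (R a) → v = R a x) ∧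
          (∀ v ∈ q.support, v ∈ Set.range (R b) → v = R b y) := by
      intro a b ha hb hab J hJ
      obtain ⟨W, hWlen⟩ := (reachAll a b ha hb).exists_walk_length_eq_dist
      have hsplit : ∀ ℓ ∈ W.support, (webGraph G R n verts).dist (Sum.inl a) ℓ +
          (webGraph G R n verts).dist ℓ (Sum.inl b) ≤ W.length := by
        intro ℓ hℓ
        have hspec := W.take_spec hℓ
        have hlen : (W.takeUntil ℓ hℓ).length + (W.dropUntil ℓ hℓ).length = W.length := by
          rw [← SimpleGraph.Walk.length_append, hspec]
        have h1 := SimpleGraph.dist_le (W.takeUntil ℓ hℓ)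
        have h2 := SimpleGraph.dist_le (W.dropUntil ℓ hℓ)
        omega
      have hJnot : ∀ j ∈ J, Sum.inl j ∉ W.support := by
        intro j hj hmem
        obtain ⟨hjn, hlt⟩ := hJ j hj
        have h1 := hsplit _ hmem
        rw [hWlen] at h1
        omega
      obtain ⟨p₀, hp₀⟩ := verts_touch a ha
      obtain ⟨w, hwv, hlw, q₀, hq₀⟩ :=
        webGraph_decon conn W (R a p₀) hp₀ (lab_ray hdisR ha p₀)
      obtain ⟨_, hwb⟩ := lab_inl hlw
      obtain ⟨xx, hxx, yy, hyy, q₁, hsub, hBlast, hAfirst⟩ :=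
        exists_trunc q₀ (Set.range (R a)) (Set.range (R b)) ⟨p₀, rfl⟩ hwb
      obtain ⟨x, rfl⟩ := hxx
      obtain ⟨y, rfl⟩ := hyy
      have hq₁verts : ∀ z ∈ q₁.support, z ∈ verts := fun z hz => (hq₀ z (hsub z hz)).1
      have hxv : R a x ∈ verts := hq₁verts _ q₁.start_mem_support
      have hyv : R b y ∈ verts := hq₁verts _ q₁.end_mem_support
      refine ⟨x, y, verts_high a ha x hxv, verts_high b hb y hyv, q₁.bypass,
        SimpleGraph.Walk.bypass_isPath q₁, ?_, ?_, ?_, ?_⟩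
      · intro v hv
        exact hq₁verts v (SimpleGraph.Walk.support_bypass_subset _ hv)
      · intro v hv j hj hvr
        obtain ⟨q, rfl⟩ := hvr
        have h1 := (hq₀ _ (hsub _ (SimpleGraph.Walk.support_bypass_subset _ hv))).2
        rw [lab_ray hdisR (hJ j hj).1 q] at h1
        exact hJnot j hj h1
      · intro v hv hvr
        exact hAfirst v (SimpleGraph.Walk.support_bypass_subset _ hv) hvr
      · intro v hv hvr
        exact hBlast v (SimpleGraph.Walk.support_bypass_subset _ hv) hvr
    exact ⟨⟨β, hnβ, verts, verts_touch, verts_high,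
      fun a b => (webGraph G R n verts).dist (Sum.inl a) (Sum.inl b),
      hddsymm, hddtri, hddzero, hrung⟩, verts_O⟩

end Build
section Ramsey

open Filter

lemma exists_uchoice {C : Type*} [Finite C] (U : Ultrafilter ℕ) (g : ℕ → C) :
    ∃ c, {n | g n = c} ∈ U := by
  by_contra hc
  push_neg at hc
  have h1 : ∀ c : C, {n | g n = c}ᶜ ∈ U := fun c => Ultrafilter.compl_mem_iff_notMem.2 (hc c)
  have h2 : (⋂ c : C, {n | g n = c}ᶜ) ∈ U := (Filter.iInter_mem).2 h1
  have h3 : (⋂ c : C, {n | g n = c}ᶜ) = ∅ := by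
    ext n
    simp only [Set.mem_iInter, Set.mem_compl_iff, Set.mem_setOf_eq, Set.mem_empty_iff_false,
      iff_false, not_forall, not_not]
    exact ⟨g n, rfl⟩
  rw [h3] at h2
  exact Filter.empty_notMem (U : Filter ℕ) h2

noncomputable def uch {C : Type*} [Finite C] (U : Ultrafilter ℕ) (g : ℕ → C) : C :=
  (exists_uchoice U g).choose

lemma uch_spec {C : Type*} [Finite C] (U : Ultrafilter ℕ) (g : ℕ → C) :
    {n | g n = uch U g} ∈ U :=
  (exists_uchoice U g).choose_spec

lemma umem_infinite {s : Set ℕ} (hs : s ∈ Filter.hyperfilter ℕ) : s.Infinite :=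
  fun hfin => Set.Finite.notMem_hyperfilter hfin hs

/-- Infinite Ramsey theorem for triples with finitely many colours. -/
theorem ramseyTriples {C : Type*} [Finite C] (col : ℕ → ℕ → ℕ → C) :
    ∃ (x : ℕ → ℕ) (c0 : C), StrictMono x ∧
      ∀ i j k : ℕ, i < j → j < k → col (x i) (x j) (x k) = c0 := by
  classical
  set U := Filter.hyperfilter ℕ with hU
  set g2 : ℕ → ℕ → C := fun a b => uch U (col a b) with hg2
  set g1 : ℕ → C := fun a => uch U (g2 a) with hg1
  set c0 : C := uch U g1 with hc0
  set T : (ℕ → ℕ) → ℕ → Set ℕ := fun f j =>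
    ({m | g1 m = c0} ∩ ⋂ i : Fin j, {m | g2 (f i) m = g1 (f i)}) ∩
      ⋂ p : Fin j × Fin j, {m | (p.1 : ℕ) < (p.2 : ℕ) →
        col (f p.1) (f p.2) m = g2 (f p.1) (f p.2)} with hT
  have hTU : ∀ f j, T f j ∈ U := by
    intro f j
    refine Filter.inter_mem (Filter.inter_mem ?_ ?_) ?_
    · exact uch_spec U g1
    · exact (Filter.iInter_mem).2 fun i => uch_spec U (g2 (f i))
    · refine (Filter.iInter_mem).2 fun p => ?_
      by_cases hp : (p.1 : ℕ) < (p.2 : ℕ)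
      · exact Filter.mem_of_superset (uch_spec U (col (f p.1) (f p.2)))
          (fun m hm _ => hm)
      · exact Filter.mem_of_superset Filter.univ_mem (fun m _ hlt => absurd hlt hp)
  have hTnext : ∀ (f : ℕ → ℕ) (j : ℕ), ∃ m, m ∈ T f j ∧ ∀ i, i < j → f i < m := by
    intro f j
    obtain ⟨m, hm, hgt⟩ := (umem_infinite (hTU f j)).exists_gt ((Finset.range j).sup f)
    exact ⟨m, hm, fun i hi =>
      lt_of_le_of_lt (Finset.le_sup (Finset.mem_range.2 hi)) hgt⟩
  choose nxt hnxt1 hnxt2 using hTnext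
  set st : ℕ → ℕ → ℕ := fun j => Nat.rec (motive := fun _ => ℕ → ℕ) (fun _ => 0)
    (fun j ih i => if i = j then nxt ih j else ih i) j with hst
  have hst_succ : ∀ j i, st (j + 1) i = if i = j then nxt (st j) j else st j i :=
    fun j i => rfl
  set x : ℕ → ℕ := fun i => st (i + 1) i with hxdef
  have hx : ∀ i, x i = nxt (st i) i := by
    intro i
    show st (i + 1) i = _
    rw [hst_succ, if_pos rfl]
  have hagree : ∀ j i, i < j → st j i = x i := by
    intro j
    induction j with
    | zero => intro i hi; omega
    | succ j ih =>
      intro i hi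
      rw [hst_succ]
      by_cases hij : i = j
      · subst hij
        rw [if_pos rfl, ← hx]
      · rw [if_neg hij]
        exact ih i (by omega)
  have hmono : StrictMono x := by
    have key : ∀ i j, i < j → x i < x j := by
      intro i j hij
      have h2 := hnxt2 (st j) j i hij
      rw [hagree j i hij] at h2
      rw [hx j]
      exact h2
    exact fun i j h => key i j h
  have hxT : ∀ j, x j ∈ T (st j) j := by
    intro j
    rw [hx]
    exact hnxt1 (st j) j
  refine ⟨x, c0, hmono, ?_⟩
  intro i j k hij hjk
  have hk := hxT k
  rw [hT] at hk
  obtain ⟨⟨hk1, hk2⟩, hk3⟩ := hk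
  have hcol : col (x i) (x j) (x k) = g2 (x i) (x j) := by
    have := Set.mem_iInter.1 hk3 (⟨i, by omega⟩, ⟨j, by omega⟩)
    simp only [Set.mem_setOf_eq] at this
    rw [hagree k i (by omega), hagree k j (by omega)] at this
    exact this hij
  have hj' := hxT j
  rw [hT] at hj'
  obtain ⟨⟨hj1, hj2⟩, _⟩ := hj'
  have hg2e : g2 (x i) (x j) = g1 (x i) := by
    have := Set.mem_iInter.1 hj2 ⟨i, by omega⟩
    simp only [Set.mem_setOf_eq] at this
    rw [hagree j i (by omega)] at this
    exact this
  have hi' := hxT i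
  rw [hT] at hi'
  obtain ⟨⟨hi1, _⟩, _⟩ := hi'
  rw [hcol, hg2e]
  exact hi1

end Ramsey
section Chain

open SimpleGraph

variable {V : Type*} (G : SimpleGraph V) (R : ℕ → ℕ → V)

/-- A countable system of disjoint rays, each linkable to ray `0` avoiding finite sets. -/
structure RaySys : Prop where
  inj : ∀ m, Function.Injective (R m)
  adj : ∀ m k, G.Adj (R m k) (R m (k + 1))
  dis : ∀ m m' p q, R m p = R m' q → m = m'
  fam : ∀ (j : ℕ) (X : Finset V), 1 ≤ j → ∃ x y, ∃ q : G.Walk (R 0 x) (R j y),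
    q.IsPath ∧ ∀ z ∈ q.support, z ∉ X

variable {G R}
variable [DecidableEq V]

noncomputable def webChain (hS : RaySys G R) : (n : ℕ) → Finset V × Web G R n
  | 0 =>
    ⟨(buildWeb hS.inj hS.adj hS.dis hS.fam ∅ 0).choose.verts,
      (buildWeb hS.inj hS.adj hS.dis hS.fam ∅ 0).choose⟩
  | n + 1 =>
    ⟨(webChain hS n).1 ∪
        (buildWeb hS.inj hS.adj hS.dis hS.fam (webChain hS n).1 (n + 1)).choose.verts,
      (buildWeb hS.inj hS.adj hS.dis hS.fam (webChain hS n).1 (n + 1)).choose⟩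

lemma wb_sub_acc (hS : RaySys G R) :
    ∀ n, ∀ v ∈ (webChain hS n).2.verts, v ∈ (webChain hS n).1 := by
  intro n v hv
  cases n with
  | zero => exact hv
  | succ m =>
    show v ∈ (webChain hS m).1 ∪ _
    exact Finset.mem_union_right _ hv

lemma acc_mono (hS : RaySys G R) : ∀ {n n'}, n ≤ n' →
    (webChain hS n).1 ⊆ (webChain hS n').1 := by
  intro n n' h
  induction n' with
  | zero => have : n = 0 := by omega
            subst this; exact subset_rfl
  | succ m ih =>
    rcases Nat.lt_or_ge n (m + 1) with h' | h'
    · refine (ih (by omega)).trans ?_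
      show (webChain hS m).1 ⊆ (webChain hS m).1 ∪ _
      exact Finset.subset_union_left
    · have : n = m + 1 := by omega
      subst this; exact subset_rfl

lemma wb_fresh (hS : RaySys G R) :
    ∀ n, ∀ v ∈ (webChain hS (n + 1)).2.verts, v ∉ (webChain hS n).1 := by
  intro n v hv
  exact (buildWeb hS.inj hS.adj hS.dis hS.fam (webChain hS n).1 (n + 1)).choose_spec v hv

lemma wb_disjoint (hS : RaySys G R) :
    ∀ {n n'}, n < n' → ∀ v ∈ (webChain hS n').2.verts, v ∉ (webChain hS n).2.verts := by
  intro n n' h v hv hv'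
  obtain ⟨m, rfl⟩ : ∃ m, n' = m + 1 := ⟨n' - 1, by omega⟩
  exact wb_fresh hS m v hv (acc_mono hS (by omega) (wb_sub_acc hS n v hv'))

lemma wb_hitSet_finite (hS : RaySys G R) (S : Finset V) :
    {n | ∃ v ∈ S, v ∈ (webChain hS n).2.verts}.Finite := by
  classical
  set T := {n | ∃ v ∈ S, v ∈ (webChain hS n).2.verts} with hT
  have hwit : ∀ nn : T, ∃ v, v ∈ S ∧ v ∈ (webChain hS (nn : ℕ)).2.verts := by
    rintro ⟨n, hn⟩
    obtain ⟨v, h1, h2⟩ := hn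
    exact ⟨v, h1, h2⟩
  choose f hf1 hf2 using hwit
  have hinj : Function.Injective f := by
    intro nn nn' he
    by_contra hne
    have hne' : (nn : ℕ) ≠ (nn' : ℕ) := fun h => hne (Subtype.ext h)
    rcases Nat.lt_or_ge (nn : ℕ) (nn' : ℕ) with h | h
    · exact wb_disjoint hS h _ (hf2 nn') (he ▸ hf2 nn)
    · exact wb_disjoint hS (by omega) _ (hf2 nn) (he ▸ hf2 nn')
  have : Finite T := by
    have : Finite S := Finite.of_fintype _
    exact Finite.of_injective (fun nn => (⟨f nn, hf1 nn⟩ : S)) (by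
      intro a b h
      exact hinj (congrArg Subtype.val h))
  exact Set.toFinite T

/-- The ordering lemma: a strictly monotone sequence of ray indices together with a
perpetual supply of rungs between consecutive rays avoiding everything prescribed. -/
theorem lemmaA (hS : RaySys G R) :
    ∃ idx : ℕ → ℕ, StrictMono idx ∧
      ∀ (k K N : ℕ) (S : Finset V), ∃ x y, N < x ∧ N < y ∧
        ∃ q : G.Walk (R (idx k) x) (R (idx (k + 1)) y), q.IsPath ∧
          (∀ v ∈ q.support, v ∉ S) ∧
          (∀ j, j ≤ K → j ≠ k → j ≠ k + 1 → ∀ v ∈ q.support, v ∉ Set.range (R (idx j))) ∧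
          (∀ v ∈ q.support, v ∈ Set.range (R (idx k)) → v = R (idx k) x) ∧
          (∀ v ∈ q.support, v ∈ Set.range (R (idx (k + 1))) → v = R (idx (k + 1)) y) := by
  classical
  set U := Filter.hyperfilter ℕ with hUdef
  set wb : ∀ n : ℕ, Web G R n := fun n => (webChain hS n).2 with hwb
  set colAt : ℕ → ℕ → ℕ → ℕ → Bool × Bool × Bool := fun n u v w =>
    (decide ((wb n).dd v w = (wb n).dd v u + (wb n).dd u w),
     decide ((wb n).dd u w = (wb n).dd u v + (wb n).dd v w),
     decide ((wb n).dd u v = (wb n).dd u w + (wb n).dd w v)) with hcolAt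
  set colU : ℕ → ℕ → ℕ → Bool × Bool × Bool :=
    fun u v w => uch U (fun n => colAt n u v w) with hcolU
  have hcolUspec : ∀ u v w, {n | colAt n u v w = colU u v w} ∈ U :=
    fun u v w => uch_spec U _
  obtain ⟨x, c0, hmono, hhom⟩ := ramseyTriples colU
  have hxle : ∀ i j, i ≤ j → x i ≤ x j := fun i j h => hmono.monotone h
  have hcobound : ∀ M : ℕ, {n | M ≤ n} ∈ U := by
    intro M
    refine Filter.hyperfilter_le_cofinite ?_
    rw [Filter.mem_cofinite]
    have : {n | M ≤ n}ᶜ ⊆ Set.Iio M := by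
      intro n hn
      simp only [Set.mem_compl_iff, Set.mem_setOf_eq, not_le] at hn
      exact hn
    exact Set.Finite.subset (Set.finite_Iio M) this
  have htripleU : ∀ i j k : ℕ, i < j → j < k →
      {n | colAt n (x i) (x j) (x k) = c0} ∈ U := by
    intro i j k hij hjk
    have := hcolUspec (x i) (x j) (x k)
    rwa [hhom i j k hij hjk] at this
  -- rule out "minimum separates"
  have hB1 : c0.1 = false := by
    by_contra hB
    have hB' : c0.1 = true := by revert hB; cases c0.1 <;> simp
    have hmem : ({n | colAt n (x 0) (x 1) (x 2) = c0} ∩ {n | colAt n (x 0) (x 1) (x 3) = c0}) ∩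
        (({n | colAt n (x 0) (x 2) (x 3) = c0} ∩ {n | colAt n (x 1) (x 2) (x 3) = c0}) ∩
        {n | x 3 ≤ n}) ∈ U := by
      refine Filter.inter_mem (Filter.inter_mem ?_ ?_)
        (Filter.inter_mem (Filter.inter_mem ?_ ?_) ?_)
      · exact htripleU 0 1 2 (by omega) (by omega)
      · exact htripleU 0 1 3 (by omega) (by omega)
      · exact htripleU 0 2 3 (by omega) (by omega)
      · exact htripleU 1 2 3 (by omega) (by omega)
      · exact hcobound (x 3)
    obtain ⟨n, ⟨hn1, hn2⟩, ⟨hn3, hn4⟩, hn5⟩ := (umem_infinite hmem).nonempty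
    simp only [Set.mem_setOf_eq, hcolAt] at hn1 hn2 hn3 hn4
    have e1 := of_decide_eq_true ((congrArg Prod.fst hn1).trans hB')
    have e2 := of_decide_eq_true ((congrArg Prod.fst hn2).trans hB')
    have e3 := of_decide_eq_true ((congrArg Prod.fst hn3).trans hB')
    have e4 := of_decide_eq_true ((congrArg Prod.fst hn4).trans hB')
    have hs := (wb n).ddsymm
    rw [hs (x 1) (x 0)] at e1 e2
    rw [hs (x 2) (x 0)] at e3
    rw [hs (x 2) (x 1)] at e4
    have h01 : (wb n).dd (x 0) (x 1) = 0 := by omega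
    have hle : x 3 ≤ n := hn5
    have h0n : x 0 ≤ n := by have := hxle 0 3 (by omega); omega
    have h1n : x 1 ≤ n := by have := hxle 1 3 (by omega); omega
    have := (wb n).ddzero (x 0) (x 1) h0n h1n h01
    exact absurd this (hmono (show (0:ℕ) < 1 by omega)).ne
  -- rule out "maximum separates"
  have hB3 : c0.2.2 = false := by
    by_contra hB
    have hB' : c0.2.2 = true := by revert hB; cases c0.2.2 <;> simp
    have hmem : ({n | colAt n (x 0) (x 1) (x 2) = c0} ∩ {n | colAt n (x 0) (x 1) (x 3) = c0}) ∩
        (({n | colAt n (x 0) (x 2) (x 3) = c0} ∩ {n | colAt n (x 1) (x 2) (x 3) = c0}) ∩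
        {n | x 3 ≤ n}) ∈ U := by
      refine Filter.inter_mem (Filter.inter_mem ?_ ?_)
        (Filter.inter_mem (Filter.inter_mem ?_ ?_) ?_)
      · exact htripleU 0 1 2 (by omega) (by omega)
      · exact htripleU 0 1 3 (by omega) (by omega)
      · exact htripleU 0 2 3 (by omega) (by omega)
      · exact htripleU 1 2 3 (by omega) (by omega)
      · exact hcobound (x 3)
    obtain ⟨n, ⟨hn1, hn2⟩, ⟨hn3, hn4⟩, hn5⟩ := (umem_infinite hmem).nonempty
    simp only [Set.mem_setOf_eq, hcolAt] at hn1 hn2 hn3 hn4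
    have hs := (wb n).ddsymm
    have e1 : (wb n).dd (x 0) (x 1) = (wb n).dd (x 0) (x 2) + (wb n).dd (x 2) (x 1) :=
      of_decide_eq_true ((congrArg (fun p : Bool × Bool × Bool => p.2.2) hn1).trans hB')
    have e2 : (wb n).dd (x 0) (x 1) = (wb n).dd (x 0) (x 3) + (wb n).dd (x 3) (x 1) :=
      of_decide_eq_true ((congrArg (fun p : Bool × Bool × Bool => p.2.2) hn2).trans hB')
    have e3 : (wb n).dd (x 0) (x 2) = (wb n).dd (x 0) (x 3) + (wb n).dd (x 3) (x 2) :=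
      of_decide_eq_true ((congrArg (fun p : Bool × Bool × Bool => p.2.2) hn3).trans hB')
    have e4 : (wb n).dd (x 1) (x 2) = (wb n).dd (x 1) (x 3) + (wb n).dd (x 3) (x 2) :=
      of_decide_eq_true ((congrArg (fun p : Bool × Bool × Bool => p.2.2) hn4).trans hB')
    have s1 : (wb n).dd (x 2) (x 1) = (wb n).dd (x 1) (x 2) := hs _ _
    have s2 : (wb n).dd (x 3) (x 1) = (wb n).dd (x 1) (x 3) := hs _ _
    have s3 : (wb n).dd (x 3) (x 2) = (wb n).dd (x 2) (x 3) := hs _ _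
    have h23 : (wb n).dd (x 2) (x 3) = 0 := by omega
    have h3n : x 3 ≤ n := hn5
    have h2n : x 2 ≤ n := by have := hxle 2 3 (by omega); omega
    have := (wb n).ddzero (x 2) (x 3) h2n h3n h23
    exact absurd this (hmono (show (2:ℕ) < 3 by omega)).ne
  -- the supply of rungs
  refine ⟨x, hmono, ?_⟩
  intro k K N S
  set a := x k with ha
  set b := x (k + 1) with hb
  set Jidx := (Finset.range (K + 1)).filter (fun j => j ≠ k ∧ j ≠ k + 1) with hJidx
  set J := Jidx.image x with hJ
  set M := N + x (K + k + 2) + 1 with hM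
  have hSavoid : {n | ∀ v ∈ (wb n).verts, v ∉ S} ∈ U := by
    refine Filter.hyperfilter_le_cofinite ?_
    rw [Filter.mem_cofinite]
    refine Set.Finite.subset (wb_hitSet_finite hS S) ?_
    intro n hn
    simp only [Set.mem_compl_iff, Set.mem_setOf_eq, not_forall] at hn
    obtain ⟨v, hv1, hv2⟩ := hn
    exact ⟨v, not_not.1 hv2, hv1⟩
  have hTsetU : ∀ j ∈ Jidx, (if j < k then {n | colAt n (x j) a b = c0}
      else {n | colAt n a b (x j) = c0}) ∈ U := by
    intro j hj
    simp only [hJidx, Finset.mem_filter, Finset.mem_range] at hj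
    obtain ⟨hjK, hjk, hjk1⟩ := hj
    by_cases hlt : j < k
    · rw [if_pos hlt]
      exact htripleU j k (k + 1) hlt (by omega)
    · rw [if_neg hlt]
      exact htripleU k (k + 1) j (by omega) (by omega)
  have hmem : ({n | ∀ v ∈ (wb n).verts, v ∉ S} ∩ {n | M ≤ n}) ∩
      (⋂ j : Jidx, (if (j : ℕ) < k then {n | colAt n (x j) a b = c0}
        else {n | colAt n a b (x j) = c0})) ∈ U := by
    refine Filter.inter_mem (Filter.inter_mem hSavoid (hcobound M)) ?_
    exact (Filter.iInter_mem).2 fun j => hTsetU j j.2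
  obtain ⟨n, ⟨hnS, hnM⟩, hnT⟩ := (umem_infinite hmem).nonempty
  have hnM' : M ≤ n := hnM
  have han : a ≤ n := by
    have := hxle k (K + k + 2) (by omega)
    simp only [hM] at hnM'
    omega
  have hbn : b ≤ n := by
    have := hxle (k + 1) (K + k + 2) (by omega)
    simp only [hM] at hnM'
    omega
  have hab : a ≠ b := (hmono (show k < k + 1 by omega)).ne
  have hrungJ : ∀ jj ∈ J, jj ≤ n ∧ (wb n).dd a b < (wb n).dd a jj + (wb n).dd jj b := by
    intro jj hjj
    simp only [hJ, Finset.mem_image] at hjj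
    obtain ⟨j, hjmem, rfl⟩ := hjj
    have hjmem' := hjmem
    simp only [hJidx, Finset.mem_filter, Finset.mem_range] at hjmem'
    obtain ⟨hjK, hjk, hjk1⟩ := hjmem'
    have hjn : x j ≤ n := by
      have := hxle j (K + k + 2) (by omega)
      simp only [hM] at hnM'
      omega
    refine ⟨hjn, ?_⟩
    have htri := (wb n).ddtri a b (x j) han hbn hjn
    rcases Nat.lt_or_ge ((wb n).dd a b) ((wb n).dd a (x j) + (wb n).dd (x j) b) with h | h
    · exact h
    · exfalso
      have heq : (wb n).dd a b = (wb n).dd a (x j) + (wb n).dd (x j) b := by omega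
      have hcol := Set.mem_iInter.1 hnT ⟨j, hjmem⟩
      by_cases hlt : j < k
      · rw [if_pos hlt] at hcol
        simp only [Set.mem_setOf_eq, hcolAt] at hcol
        have hfst := congrArg Prod.fst hcol
        rw [hB1] at hfst
        exact of_decide_eq_false hfst heq
      · rw [if_neg hlt] at hcol
        simp only [Set.mem_setOf_eq, hcolAt] at hcol
        have hfst : decide ((wb n).dd a b = (wb n).dd a (x j) + (wb n).dd (x j) b) = c0.2.2 :=
          congrArg (fun p : Bool × Bool × Bool => p.2.2) hcol
        rw [hB3] at hfst
        exact of_decide_eq_false hfst heq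
  obtain ⟨xx, yy, hxx, hyy, q, hqpath, hqverts, hqJ, hqA, hqB⟩ :=
    (wb n).rung a b han hbn hab J hrungJ
  have hβn : n ≤ (wb n).β := (wb n).hβ
  refine ⟨xx, yy, by simp only [hM] at hnM'; omega, by simp only [hM] at hnM'; omega,
    q, hqpath, ?_, ?_, hqA, hqB⟩
  · intro v hv
    exact hnS v (hqverts v hv)
  · intro j hjK hjk hjk1 v hv
    refine hqJ v hv (x j) ?_
    simp only [hJ, Finset.mem_image]
    exact ⟨j, by simp only [hJidx, Finset.mem_filter, Finset.mem_range]; exact ⟨by omega, hjk, hjk1⟩, rfl⟩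

end Chain
section Stage

/-- Height of the slot processed at stage `s`. -/
def mmS (s : ℕ) : ℕ := s - Nat.sqrt s * Nat.sqrt s

/-- Column (left column of the rung) of the slot processed at stage `s`. -/
def kkS (s : ℕ) : ℕ := 2 * Nat.sqrt s - mmS s

/-- The stage at which slot `(k, m)` is processed (valid when `(k+m)` is even). -/
def stg (k m : ℕ) : ℕ := ((k + m) / 2) * ((k + m) / 2) + m

lemma sqrt_sq_le (s : ℕ) : Nat.sqrt s * Nat.sqrt s ≤ s := by
  have h := Nat.sqrt_le' s
  have e : Nat.sqrt s ^ 2 = Nat.sqrt s * Nat.sqrt s := by ring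
  omega

lemma lt_sqrt_succ (s : ℕ) : s < (Nat.sqrt s + 1) * (Nat.sqrt s + 1) := by
  have h := Nat.lt_succ_sqrt' s
  have e : (Nat.sqrt s).succ ^ 2 = (Nat.sqrt s + 1) * (Nat.sqrt s + 1) := by
    rw [Nat.succ_eq_add_one]; ring
  omega

lemma mmS_le (s : ℕ) : mmS s ≤ 2 * Nat.sqrt s := by
  have h1 := sqrt_sq_le s
  have h2 := lt_sqrt_succ s
  have e : (Nat.sqrt s + 1) * (Nat.sqrt s + 1) =
      Nat.sqrt s * Nat.sqrt s + 2 * Nat.sqrt s + 1 := by ring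
  unfold mmS
  omega

lemma kkS_add_mmS (s : ℕ) : kkS s + mmS s = 2 * Nat.sqrt s := by
  have := mmS_le s
  unfold kkS
  omega

lemma stg_kkS_mmS (s : ℕ) : stg (kkS s) (mmS s) = s := by
  have h1 := sqrt_sq_le s
  have h2 := kkS_add_mmS s
  unfold stg
  rw [h2]
  have h3 : 2 * Nat.sqrt s / 2 = Nat.sqrt s := by omega
  rw [h3]
  unfold mmS
  omega

lemma sqrt_eq_of (q m : ℕ) (hm : m ≤ 2 * q) : Nat.sqrt (q * q + m) = q := by
  have h1 : q ≤ Nat.sqrt (q * q + m) := by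
    rw [Nat.le_sqrt']
    have e : q ^ 2 = q * q := by ring
    omega
  have h2 : Nat.sqrt (q * q + m) < q + 1 := by
    rw [Nat.sqrt_lt']
    have e : (q + 1) ^ 2 = q * q + 2 * q + 1 := by ring
    omega
  omega

lemma sqrt_stg (k m : ℕ) (h : (k + m) % 2 = 0) :
    Nat.sqrt (stg k m) = (k + m) / 2 := by
  unfold stg
  exact sqrt_eq_of _ _ (by omega)

lemma mmS_stg (k m : ℕ) (h : (k + m) % 2 = 0) : mmS (stg k m) = m := by
  have h1 := sqrt_stg k m h
  unfold mmS
  rw [h1]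
  unfold stg
  omega

lemma kkS_stg (k m : ℕ) (h : (k + m) % 2 = 0) : kkS (stg k m) = k := by
  have h1 := sqrt_stg k m h
  have h2 := mmS_stg k m h
  unfold kkS
  rw [h1, h2]
  omega

lemma stg_mono {k m k' m' : ℕ} (he : (k + m) % 2 = 0) (he' : (k' + m') % 2 = 0)
    (h : k + m < k' + m' ∨ (k + m = k' + m' ∧ m < m')) : stg k m < stg k' m' := by
  rcases h with h | ⟨h1, h2⟩
  · have hqq : (k + m) / 2 < (k' + m') / 2 := by omega
    have hmono : ((k + m) / 2 + 1) * ((k + m) / 2 + 1) ≤ ((k' + m') / 2) * ((k' + m') / 2) :=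
      Nat.mul_le_mul (by omega) (by omega)
    have he1 : ((k + m) / 2 + 1) * ((k + m) / 2 + 1) =
        ((k + m) / 2) * ((k + m) / 2) + 2 * ((k + m) / 2) + 1 := by ring
    have hm : m ≤ 2 * ((k + m) / 2) := by omega
    unfold stg
    omega
  · have hq : (k + m) / 2 = (k' + m') / 2 := by omega
    unfold stg
    rw [hq]
    omega

end Stage
section Assemble

open SimpleGraph

variable {V : Type*} {G : SimpleGraph V} {R : ℕ → ℕ → V} {idx : ℕ → ℕ}

/-- All data supplied by the ordering lemma. -/
structure Supply (G : SimpleGraph V) (R : ℕ → ℕ → V) (idx : ℕ → ℕ) : Prop where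
  mono : StrictMono idx
  rinj : ∀ m, Function.Injective (R m)
  radj : ∀ m k, G.Adj (R m k) (R m (k + 1))
  rdis : ∀ m m' p q, R m p = R m' q → m = m'
  sup : ∀ (k K N : ℕ) (S : Finset V), ∃ x y, N < x ∧ N < y ∧
    ∃ q : G.Walk (R (idx k) x) (R (idx (k + 1)) y), q.IsPath ∧
      (∀ v ∈ q.support, v ∉ S) ∧
      (∀ j, j ≤ K → j ≠ k → j ≠ k + 1 → ∀ v ∈ q.support, v ∉ Set.range (R (idx j))) ∧
      (∀ v ∈ q.support, v ∈ Set.range (R (idx k)) → v = R (idx k) x) ∧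
      (∀ v ∈ q.support, v ∈ Set.range (R (idx (k + 1))) → v = R (idx (k + 1)) y)

variable (G R idx) in
/-- A rung for the slot at stage `t`. -/
structure Rung (t : ℕ) where
  xh : ℕ
  yh : ℕ
  wk : G.Walk (R (idx (kkS t)) xh) (R (idx (kkS t + 1)) yh)

variable (G R idx) in
/-- Intrinsic goodness of a rung. -/
def RungGood (t : ℕ) (r : Rung G R idx t) : Prop :=
  r.wk.IsPath ∧ 1 < r.xh ∧ 1 < r.yh ∧
  (∀ j, j ≤ 2 * Nat.sqrt t + 1 → j ≠ kkS t → j ≠ kkS t + 1 →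
    ∀ v ∈ r.wk.support, v ∉ Set.range (R (idx j))) ∧
  (∀ v ∈ r.wk.support, v ∈ Set.range (R (idx (kkS t))) → v = R (idx (kkS t)) r.xh) ∧
  (∀ v ∈ r.wk.support, v ∈ Set.range (R (idx (kkS t + 1))) → v = R (idx (kkS t + 1)) r.yh)

variable (G R idx) in
/-- Goodness of a rung relative to a finite obstacle set. -/
def RungRel (t : ℕ) (r : Rung G R idx t) (S : Finset V) : Prop :=
  (∀ v ∈ r.wk.support, v ∉ S) ∧
  (∀ p, R (idx (kkS t)) p ∈ S → p + 1 < r.xh) ∧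
  (∀ p, R (idx (kkS t + 1)) p ∈ S → p + 1 < r.yh)

lemma exists_nextRung (hS : Supply G R idx) (s : ℕ) (S : Finset V) :
    ∃ r : Rung G R idx s, RungGood G R idx s r ∧ RungRel G R idx s r S := by
  classical
  obtain ⟨bA, hbA⟩ := exists_posBound (R (idx (kkS s))) (hS.rinj _) S
  obtain ⟨bB, hbB⟩ := exists_posBound (R (idx (kkS s + 1))) (hS.rinj _) S
  obtain ⟨x, y, hx, hy, q, hqpath, hqS, hqJ, hqA, hqB⟩ :=
    hS.sup (kkS s) (2 * Nat.sqrt s + 1) (bA + bB + 2) S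
  refine ⟨⟨x, y, q⟩, ⟨hqpath, by show 1 < x; omega, by show 1 < y; omega, ?_, hqA, hqB⟩,
    hqS, ?_, ?_⟩
  · intro j hj hj1 hj2 v hv
    exact hqJ j hj hj1 hj2 v hv
  · intro p hp
    show p + 1 < x
    have := hbA p hp
    omega
  · intro p hp
    show p + 1 < y
    have := hbB p hp
    omega

variable (G R idx) in
noncomputable def sfin [DecidableEq V] (s : ℕ) (f : ∀ t, t < s → Rung G R idx t) : Finset V :=
  (Finset.range s).attach.biUnion
    (fun t => (f t.1 (Finset.mem_range.1 t.2)).wk.support.toFinset)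

noncomputable def chainF [DecidableEq V] (hS : Supply G R idx) :
    (s : ℕ) → ∀ t, t < s → Rung G R idx t
  | 0 => fun t ht => absurd ht (Nat.not_lt_zero t)
  | s + 1 => fun t ht =>
      if h : t < s then chainF hS s t h
      else (Nat.le_antisymm (by omega) (by omega) : s = t) ▸
        (exists_nextRung hS s (sfin G R idx s (chainF hS s))).choose

variable [DecidableEq V]

noncomputable def rg (hS : Supply G R idx) (t : ℕ) : Rung G R idx t :=
  chainF hS (t + 1) t (Nat.lt_succ_self t)

lemma chainF_eq (hS : Supply G R idx) : ∀ s t (ht : t < s), chainF hS s t ht = rg hS t := by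
  intro s
  induction s with
  | zero => intro t ht; omega
  | succ s ih =>
    intro t ht
    by_cases h : t < s
    · have h1 : chainF hS (s + 1) t ht = chainF hS s t h := by
        show (if h' : t < s then chainF hS s t h' else _) = _
        rw [dif_pos h]
      rw [h1, ih t h]
    · have hts : t = s := by omega
      subst hts
      rfl

lemma rg_eq (hS : Supply G R idx) (s : ℕ) :
    rg hS s = (exists_nextRung hS s (sfin G R idx s (chainF hS s))).choose := by
  show (if h : s < s then chainF hS s s h else _) = _
  rw [dif_neg (lt_irrefl s)]

lemma rg_good (hS : Supply G R idx) (s : ℕ) : RungGood G R idx s (rg hS s) := by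
  rw [rg_eq]
  exact (exists_nextRung hS s (sfin G R idx s (chainF hS s))).choose_spec.1

lemma rg_rel (hS : Supply G R idx) (s : ℕ) :
    RungRel G R idx s (rg hS s) (sfin G R idx s (chainF hS s)) := by
  rw [rg_eq]
  exact (exists_nextRung hS s (sfin G R idx s (chainF hS s))).choose_spec.2

lemma mem_sfin (hS : Supply G R idx) {t s : ℕ} (h : t < s) {v : V}
    (hv : v ∈ (rg hS t).wk.support) : v ∈ sfin G R idx s (chainF hS s) := by
  refine Finset.mem_biUnion.2 ⟨⟨t, Finset.mem_range.2 h⟩, Finset.mem_attach _ _, ?_⟩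
  rw [List.mem_toFinset, chainF_eq]
  exact hv

/-- Pair facts between an earlier and a later rung. -/
lemma rg_pair_disj (hS : Supply G R idx) {t' t : ℕ} (h : t' < t) :
    ∀ v ∈ (rg hS t).wk.support, v ∉ (rg hS t').wk.support := by
  intro v hv hv'
  exact (rg_rel hS t).1 v hv (mem_sfin hS h hv')

lemma rg_pair_xh (hS : Supply G R idx) {t' t : ℕ} (h : t' < t) :
    ∀ p, R (idx (kkS t)) p ∈ (rg hS t').wk.support → p + 1 < (rg hS t).xh := by
  intro p hp
  exact (rg_rel hS t).2.1 p (mem_sfin hS h hp)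

lemma rg_pair_yh (hS : Supply G R idx) {t' t : ℕ} (h : t' < t) :
    ∀ p, R (idx (kkS t + 1)) p ∈ (rg hS t').wk.support → p + 1 < (rg hS t).yh := by
  intro p hp
  exact (rg_rel hS t).2.2 p (mem_sfin hS h hp)

/-- Branch positions along column `c`. -/
noncomputable def XP (hS : Supply G R idx) (c m : ℕ) : ℕ :=
  if (c + m) % 2 = 0 then (rg hS (stg c m)).xh
  else if c = 0 then (rg hS (stg 0 (m - 1))).xh + 1
  else (rg hS (stg (c - 1) m)).yh

lemma XP_right (hS : Supply G R idx) {c m : ℕ} (h : (c + m) % 2 = 0) :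
    XP hS c m = (rg hS (stg c m)).xh := by
  rw [XP, if_pos h]

lemma XP_left (hS : Supply G R idx) {c m : ℕ} (hc : 1 ≤ c) (h : (c + m) % 2 = 1) :
    XP hS c m = (rg hS (stg (c - 1) m)).yh := by
  rw [XP, if_neg (by omega), if_neg (by omega)]

lemma XP_oddzero (hS : Supply G R idx) {m : ℕ} (h : m % 2 = 1) :
    XP hS 0 m = (rg hS (stg 0 (m - 1))).xh + 1 := by
  rw [XP, if_neg (by omega), if_pos rfl]

lemma att_xh_mem (hS : Supply G R idx) (t : ℕ) :
    R (idx (kkS t)) (rg hS t).xh ∈ (rg hS t).wk.support :=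
  (rg hS t).wk.start_mem_support

lemma att_yh_mem (hS : Supply G R idx) (t : ℕ) :
    R (idx (kkS t + 1)) (rg hS t).yh ∈ (rg hS t).wk.support :=
  (rg hS t).wk.end_mem_support

lemma XP_lt_succ (hS : Supply G R idx) (c m : ℕ) : XP hS c m < XP hS c (m + 1) := by
  by_cases hp : (c + m) % 2 = 0
  · -- right owner at height m
    rw [XP_right hS hp]
    by_cases hc : c = 0
    · subst hc
      rw [XP_oddzero hS (by omega)]
      have : m + 1 - 1 = m := by omega
      rw [this]
      omega
    · rw [XP_left hS (by omega) (by omega)]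
      have hval : (c - 1 + (m + 1)) % 2 = 0 := by omega
      have ht : stg c m < stg (c - 1) (m + 1) :=
        stg_mono hp hval (Or.inr ⟨by omega, by omega⟩)
      have hk2 : kkS (stg (c - 1) (m + 1)) = c - 1 := kkS_stg _ _ hval
      have hk1 : kkS (stg c m) = c := kkS_stg _ _ hp
      have happ := rg_pair_yh hS ht ((rg hS (stg c m)).xh)
      have hcc : c - 1 + 1 = c := by omega
      have hfe : R (idx (kkS (stg (c - 1) (m + 1)) + 1)) = R (idx (kkS (stg c m))) := by
        rw [hk2, hcc, hk1]
      rw [hfe] at happ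
      have := happ (att_xh_mem hS (stg c m))
      omega
  · by_cases hc : c = 0
    · subst hc
      rw [XP_oddzero hS (by omega), XP_right hS (by omega)]
      have hm1 : (0 + (m - 1)) % 2 = 0 := by omega
      have hm2 : (0 + (m + 1)) % 2 = 0 := by omega
      have ht : stg 0 (m - 1) < stg 0 (m + 1) :=
        stg_mono hm1 hm2 (Or.inl (by omega))
      have hk1 : kkS (stg 0 (m - 1)) = 0 := kkS_stg _ _ hm1
      have hk2 : kkS (stg 0 (m + 1)) = 0 := kkS_stg _ _ hm2
      have happ := rg_pair_xh hS ht ((rg hS (stg 0 (m - 1))).xh)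
      have hfe : R (idx (kkS (stg 0 (m + 1)))) = R (idx (kkS (stg 0 (m - 1)))) := by
        rw [hk2, hk1]
      rw [hfe] at happ
      have := happ (att_xh_mem hS (stg 0 (m - 1)))
      omega
    · rw [XP_left hS (by omega) (by omega), XP_right hS (by omega)]
      have hm1 : (c - 1 + m) % 2 = 0 := by omega
      have hm2 : (c + (m + 1)) % 2 = 0 := by omega
      have ht : stg (c - 1) m < stg c (m + 1) :=
        stg_mono hm1 hm2 (Or.inl (by omega))
      have hk1 : kkS (stg (c - 1) m) = c - 1 := kkS_stg _ _ hm1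
      have hk2 : kkS (stg c (m + 1)) = c := kkS_stg _ _ hm2
      have hcc : c - 1 + 1 = c := by omega
      have happ := rg_pair_xh hS ht ((rg hS (stg (c - 1) m)).yh)
      have hfe : R (idx (kkS (stg c (m + 1)))) = R (idx (kkS (stg (c - 1) m) + 1)) := by
        rw [hk2, hk1, hcc]
      rw [hfe] at happ
      have := happ (att_yh_mem hS (stg (c - 1) m))
      omega

lemma XP_mono (hS : Supply G R idx) (c : ℕ) : StrictMono (XP hS c) :=
  strictMono_nat_of_lt_succ (XP_lt_succ hS c)

/-- A late column's branch positions dominate an early rung's positions on that ray. -/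
lemma rung_pos_lt (hS : Supply G R idx) {t c : ℕ} (hc : 2 * Nat.sqrt t + 1 < c)
    {p : ℕ} (hp : R (idx c) p ∈ (rg hS t).wk.support) (m : ℕ) : p + 1 < XP hS c m := by
  have hc1 : 1 ≤ c := by omega
  by_cases hpar : (c + m) % 2 = 0
  · -- owner is stg c m, attachment is xh
    rw [XP_right hS hpar]
    have hk : kkS (stg c m) = c := kkS_stg _ _ hpar
    have hsq : Nat.sqrt (stg c m) = (c + m) / 2 := sqrt_stg _ _ hpar
    have ht : t < stg c m := by
      by_contra hle
      have := Nat.sqrt_le_sqrt (show stg c m ≤ t by omega)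
      omega
    have := rg_pair_xh hS ht p
    rw [hk] at this
    exact this hp
  · rw [XP_left hS hc1 (by omega)]
    have hval : (c - 1 + m) % 2 = 0 := by omega
    have hk : kkS (stg (c - 1) m) = c - 1 := kkS_stg _ _ hval
    have hsq : Nat.sqrt (stg (c - 1) m) = (c - 1 + m) / 2 := sqrt_stg _ _ hval
    have ht : t < stg (c - 1) m := by
      by_contra hle
      have := Nat.sqrt_le_sqrt (show stg (c - 1) m ≤ t by omega)
      omega
    have happ := rg_pair_yh hS ht p
    rw [hk] at happ
    have hcc : c - 1 + 1 = c := by omega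
    rw [hcc] at happ
    exact happ hp

end Assemble
section FinalAssemble

open SimpleGraph

variable {V : Type*} {G : SimpleGraph V} {R : ℕ → ℕ → V} {idx : ℕ → ℕ} [DecidableEq V]

/-- The branch-vertex map. -/
noncomputable def phiF (hS : Supply G R idx) : ℕ × ℕ → V :=
  fun cm => R (idx cm.1) (XP hS cm.1 cm.2)

noncomputable def vertW (hS : Supply G R idx) (c m : ℕ) :
    G.Walk (phiF hS (c, m)) (phiF hS (c, m + 1)) :=
  (raySeg (R (idx c)) (fun n => hS.radj (idx c) n) (XP hS c m)
      (XP hS c (m + 1) - XP hS c m)).copy rfl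
    (congrArg (R (idx c)) (by
      show XP hS c m + (XP hS c (m + 1) - XP hS c m) = XP hS c (m + 1)
      have := XP_lt_succ hS c m
      omega))

lemma vertW_support (hS : Supply G R idx) (c m : ℕ) (v : V) :
    v ∈ (vertW hS c m).support ↔
      ∃ i, XP hS c m ≤ i ∧ i ≤ XP hS c (m + 1) ∧ v = R (idx c) i := by
  rw [show (vertW hS c m).support = (raySeg (R (idx c)) (fun n => hS.radj (idx c) n) (XP hS c m)
      (XP hS c (m + 1) - XP hS c m)).support from SimpleGraph.Walk.support_copy _ _ _]
  rw [raySeg_support]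
  constructor
  · rintro ⟨i, hi, rfl⟩
    exact ⟨XP hS c m + i, by omega, by have := XP_lt_succ hS c m; omega, rfl⟩
  · rintro ⟨i, hi1, hi2, rfl⟩
    exact ⟨i - XP hS c m, by omega, by rw [Nat.add_sub_cancel' hi1]⟩

lemma vertW_isPath (hS : Supply G R idx) (c m : ℕ) : (vertW hS c m).IsPath := by
  rw [show (vertW hS c m).IsPath ↔ (raySeg (R (idx c)) (fun n => hS.radj (idx c) n) (XP hS c m)
      (XP hS c (m + 1) - XP hS c m)).IsPath from SimpleGraph.Walk.isPath_copy _ _ _]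
  exact raySeg_isPath _ (hS.rinj _) _ _ _

lemma hpar_left {k m : ℕ} (hpar : (k + m) % 2 = 0) : (k + 1 + m) % 2 = 1 := by omega

noncomputable def horizW (hS : Supply G R idx) (k m : ℕ) (hpar : (k + m) % 2 = 0) :
    G.Walk (phiF hS (k, m)) (phiF hS (k + 1, m)) :=
  ((rg hS (stg k m)).wk).copy
    (by
      show R (idx (kkS (stg k m))) (rg hS (stg k m)).xh = R (idx k) (XP hS k m)
      rw [kkS_stg k m hpar, XP_right hS hpar])
    (by
      show R (idx (kkS (stg k m) + 1)) (rg hS (stg k m)).yh = R (idx (k + 1)) (XP hS (k + 1) m)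
      rw [kkS_stg k m hpar, XP_left hS (by omega) (hpar_left hpar)]
      have hred : k + 1 - 1 = k := rfl
      rw [hred])

lemma horizW_support (hS : Supply G R idx) (k m : ℕ) (hpar : (k + m) % 2 = 0) (v : V) :
    v ∈ (horizW hS k m hpar).support ↔ v ∈ (rg hS (stg k m)).wk.support := by
  rw [horizW, SimpleGraph.Walk.support_copy]

lemma horizW_isPath (hS : Supply G R idx) (k m : ℕ) (hpar : (k + m) % 2 = 0) :
    (horizW hS k m hpar).IsPath := by
  rw [horizW, SimpleGraph.Walk.isPath_copy]
  exact (rg_good hS (stg k m)).1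

lemma phiF_inj (hS : Supply G R idx) : Function.Injective (phiF hS) := by
  rintro ⟨c, m⟩ ⟨c', m'⟩ h
  simp only [phiF] at h
  obtain rfl : c = c' := hS.mono.injective (hS.rdis _ _ _ _ h)
  obtain rfl : m = m' := (XP_mono hS c).injective (hS.rinj _ h)
  rfl

lemma XP_att_xh (hS : Supply G R idx) (t : ℕ) :
    XP hS (kkS t) (mmS t) = (rg hS t).xh := by
  have hpar : (kkS t + mmS t) % 2 = 0 := by
    have := kkS_add_mmS t
    omega
  rw [XP_right hS hpar, stg_kkS_mmS]

lemma XP_att_yh (hS : Supply G R idx) (t : ℕ) :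
    XP hS (kkS t + 1) (mmS t) = (rg hS t).yh := by
  have hpar : (kkS t + mmS t) % 2 = 0 := by
    have := kkS_add_mmS t
    omega
  rw [XP_left hS (by omega) (by omega)]
  have hred : kkS t + 1 - 1 = kkS t := rfl
  rw [hred, stg_kkS_mmS]

/-- Where a rung's support can meet a ray. -/
lemma rung_ray_cases (hS : Supply G R idx) (t c p : ℕ)
    (hv : R (idx c) p ∈ (rg hS t).wk.support) :
    (c = kkS t ∧ p = (rg hS t).xh) ∨ (c = kkS t + 1 ∧ p = (rg hS t).yh) ∨
    (2 * Nat.sqrt t + 1 < c ∧ ∀ m, p + 1 < XP hS c m) := by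
  obtain ⟨hpath, hx1, hy1, hJav, hA, hB⟩ := rg_good hS t
  by_cases h1 : c = kkS t
  · subst h1
    left
    have := hA _ hv ⟨p, rfl⟩
    exact ⟨rfl, hS.rinj _ this⟩
  · by_cases h2 : c = kkS t + 1
    · subst h2
      right; left
      have := hB _ hv ⟨p, rfl⟩
      exact ⟨rfl, hS.rinj _ this⟩
    · by_cases h3 : c ≤ 2 * Nat.sqrt t + 1
      · exact absurd ⟨p, rfl⟩ (hJav c h3 h1 h2 _ hv)
      · exact Or.inr (Or.inr ⟨by omega, fun m => rung_pos_lt hS (by omega) hv m⟩)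

/-- A rung support vertex that is a branch vertex is one of the rung's two endpoints. -/
lemma rung_branch (hS : Supply G R idx) (k m : ℕ) (hpar : (k + m) % 2 = 0) (c' m' : ℕ)
    (hv : phiF hS (c', m') ∈ (rg hS (stg k m)).wk.support) :
    (c' = k ∧ m' = m) ∨ (c' = k + 1 ∧ m' = m) := by
  have hk := kkS_stg k m hpar
  have hm := mmS_stg k m hpar
  rcases rung_ray_cases hS (stg k m) c' (XP hS c' m') hv with ⟨hc, hp⟩ | ⟨hc, hp⟩ | ⟨_, hp⟩
  · left
    have h1 : c' = k := by rw [hc, hk]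
    have h3 := XP_att_xh hS (stg k m)
    rw [hk, hm] at h3
    refine ⟨h1, ?_⟩
    have h2 : XP hS c' m' = XP hS c' m := by rw [hp, ← h3, h1]
    exact (XP_mono hS c').injective h2
  · right
    have h1 : c' = k + 1 := by rw [hc, hk]
    have h3 := XP_att_yh hS (stg k m)
    rw [hk, hm] at h3
    refine ⟨h1, ?_⟩
    have h2 : XP hS c' m' = XP hS c' m := by rw [hp, ← h3, h1]
    exact (XP_mono hS c').injective h2
  · have := hp m'
    omega

end FinalAssemble
section Core

open SimpleGraph

variable {V : Type*} {G : SimpleGraph V} {R : ℕ → ℕ → V} {idx : ℕ → ℕ} [DecidableEq V]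

lemma coreV (hS : Supply G R idx) (c m : ℕ) (v : V) (hv : v ∈ (vertW hS c m).support)
    (hr : v ∈ Set.range (phiF hS)) : v = phiF hS (c, m) ∨ v = phiF hS (c, m + 1) := by
  obtain ⟨i, hi1, hi2, rfl⟩ := (vertW_support hS c m v).1 hv
  obtain ⟨⟨c', m'⟩, he⟩ := hr
  have hc : c' = c := hS.mono.injective (hS.rdis _ _ _ _ he)
  subst hc
  have hXi : XP hS c' m' = i := hS.rinj _ he
  have h1 : m ≤ m' := ((XP_mono hS c').le_iff_le).1 (by omega)
  have h2 : m' ≤ m + 1 := ((XP_mono hS c').le_iff_le).1 (by omega)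
  rcases (by omega : m' = m ∨ m' = m + 1) with rfl | rfl
  · exact Or.inl he.symm
  · exact Or.inr he.symm

lemma coreVV (hS : Supply G R idx) (c m c' m' : ℕ) (hne : (c, m) ≠ (c', m')) (v : V)
    (hv : v ∈ (vertW hS c m).support) (hv' : v ∈ (vertW hS c' m').support) :
    (v = phiF hS (c, m) ∨ v = phiF hS (c, m + 1)) ∧
    (v = phiF hS (c', m') ∨ v = phiF hS (c', m' + 1)) := by
  obtain ⟨i, hi1, hi2, rfl⟩ := (vertW_support hS c m v).1 hv
  obtain ⟨i', hi1', hi2', he⟩ := (vertW_support hS c' m' _).1 hv'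
  have hc : c = c' := hS.mono.injective (hS.rdis _ _ _ _ he)
  subst hc
  have hii : i = i' := hS.rinj _ he
  subst hii
  have hmm : m ≠ m' := fun h => hne (by rw [h])
  rcases Nat.lt_or_ge m m' with hlt | hge
  · have h1 : m' ≤ m + 1 := ((XP_mono hS c).le_iff_le).1 (by omega)
    have hm1 : m' = m + 1 := by omega
    subst hm1
    have hieq : i = XP hS c (m + 1) := by omega
    constructor
    · right; rw [hieq]; rfl
    · left; rw [hieq]; rfl
  · have hlt' : m' < m := by omega
    have h1 : m ≤ m' + 1 := ((XP_mono hS c).le_iff_le).1 (by omega)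
    have hm1 : m = m' + 1 := by omega
    subst hm1
    have hieq : i = XP hS c (m' + 1) := by omega
    constructor
    · left; rw [hieq]; rfl
    · right; rw [hieq]; rfl

lemma coreVH (hS : Supply G R idx) (c m k mh : ℕ) (hpar : (k + mh) % 2 = 0) (v : V)
    (hv : v ∈ (vertW hS c m).support) (hv' : v ∈ (rg hS (stg k mh)).wk.support) :
    (v = phiF hS (c, m) ∨ v = phiF hS (c, m + 1)) ∧
    (v = phiF hS (k, mh) ∨ v = phiF hS (k + 1, mh)) := by
  obtain ⟨i, hi1, hi2, rfl⟩ := (vertW_support hS c m v).1 hv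
  have hk := kkS_stg k mh hpar
  have hm := mmS_stg k mh hpar
  rcases rung_ray_cases hS (stg k mh) c i hv' with ⟨hc, hp⟩ | ⟨hc, hp⟩ | ⟨_, hp⟩
  · have hck : c = k := by rw [hc, hk]
    subst hck
    have h3 := XP_att_xh hS (stg c mh)
    rw [hk, hm] at h3
    have hieq : i = XP hS c mh := by rw [hp, ← h3]
    have hle1 : m ≤ mh := ((XP_mono hS c).le_iff_le).1 (by omega)
    have hle2 : mh ≤ m + 1 := ((XP_mono hS c).le_iff_le).1 (by omega)
    constructor
    · rcases (by omega : mh = m ∨ mh = m + 1) with h | h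
      · left; rw [hieq, h]; rfl
      · right; rw [hieq, h]; rfl
    · left; rw [hieq]; rfl
  · have hck : c = k + 1 := by rw [hc, hk]
    subst hck
    have h3 := XP_att_yh hS (stg k mh)
    rw [hk, hm] at h3
    have hieq : i = XP hS (k + 1) mh := by rw [hp, ← h3]
    have hle1 : m ≤ mh := ((XP_mono hS (k + 1)).le_iff_le).1 (by omega)
    have hle2 : mh ≤ m + 1 := ((XP_mono hS (k + 1)).le_iff_le).1 (by omega)
    constructor
    · rcases (by omega : mh = m ∨ mh = m + 1) with h | h
      · left; rw [hieq, h]; rfl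
      · right; rw [hieq, h]; rfl
    · right; rw [hieq]; rfl
  · have := hp m
    omega

lemma coreHH (hS : Supply G R idx) (k m k' m' : ℕ) (hpar : (k + m) % 2 = 0)
    (hpar' : (k' + m') % 2 = 0) (hne : (k, m) ≠ (k', m')) (v : V)
    (hv : v ∈ (rg hS (stg k m)).wk.support) (hv' : v ∈ (rg hS (stg k' m')).wk.support) :
    False := by
  have hst : stg k m ≠ stg k' m' := by
    intro h
    have h1 : k = k' := by rw [← kkS_stg k m hpar, ← kkS_stg k' m' hpar', h]
    have h2 : m = m' := by rw [← mmS_stg k m hpar, ← mmS_stg k' m' hpar', h]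
    exact hne (by rw [h1, h2])
  rcases Nat.lt_or_ge (stg k m) (stg k' m') with h | h
  · exact rg_pair_disj hS h v hv' hv
  · exact rg_pair_disj hS (by omega : stg k' m' < stg k m) v hv hv'

end Core
section PBuild

open SimpleGraph

variable {V : Type*} {G : SimpleGraph V} {R : ℕ → ℕ → V} {idx : ℕ → ℕ} [DecidableEq V]

lemma pext {p q : ℕ × ℕ} (h1 : p.1 = q.1) (h2 : p.2 = q.2) : p = q := by
  cases p; cases q
  simp only [Prod.mk.injEq]
  exact ⟨h1, h2⟩

lemma hexAdj_elim {a b : ℕ × ℕ} (h : hexHalfGrid.Adj a b) :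
    a ≠ b ∧ (((a.1 = b.1 ∧ b.2 = a.2 + 1) ∨ (a.2 = b.2 ∧ b.1 = a.1 + 1 ∧ (a.1 + a.2) % 2 = 0)) ∨
      ((b.1 = a.1 ∧ a.2 = b.2 + 1) ∨ (b.2 = a.2 ∧ a.1 = b.1 + 1 ∧ (b.1 + b.2) % 2 = 0))) := by
  rw [hexHalfGrid, SimpleGraph.fromRel_adj] at h
  exact h

lemma hexAdj_par3 {a b : ℕ × ℕ} (h : hexHalfGrid.Adj a b)
    (h1 : ¬(a.1 = b.1 ∧ b.2 = a.2 + 1)) (h2 : ¬(a.1 = b.1 ∧ a.2 = b.2 + 1))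
    (h3 : a.2 = b.2 ∧ b.1 = a.1 + 1) : (a.1 + a.2) % 2 = 0 := by
  obtain ⟨hne, hrel⟩ := hexAdj_elim h
  rcases hrel with (⟨e1, e2⟩ | ⟨e1, e2, e3⟩) | (⟨e1, e2⟩ | ⟨e1, e2, e3⟩)
  · exact absurd ⟨e1, e2⟩ h1
  · exact e3
  · exact absurd ⟨e1.symm, e2⟩ h2
  · exfalso; omega

lemma hexAdj_case4 {a b : ℕ × ℕ} (h : hexHalfGrid.Adj a b)
    (h1 : ¬(a.1 = b.1 ∧ b.2 = a.2 + 1)) (h2 : ¬(a.1 = b.1 ∧ a.2 = b.2 + 1))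
    (h3 : ¬(a.2 = b.2 ∧ b.1 = a.1 + 1)) :
    a.2 = b.2 ∧ a.1 = b.1 + 1 ∧ (b.1 + b.2) % 2 = 0 := by
  obtain ⟨hne, hrel⟩ := hexAdj_elim h
  rcases hrel with (⟨e1, e2⟩ | ⟨e1, e2, e3⟩) | (⟨e1, e2⟩ | ⟨e1, e2, e3⟩)
  · exact absurd ⟨e1, e2⟩ h1
  · exact absurd ⟨e1, e2⟩ h3
  · exact absurd ⟨e1.symm, e2⟩ h2
  · exact ⟨e1.symm, e2, e3⟩

noncomputable def Pdef (hS : Supply G R idx) :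
    ∀ ⦃a b : ℕ × ℕ⦄, hexHalfGrid.Adj a b → G.Walk (phiF hS a) (phiF hS b) :=
  fun a b h =>
    if h1 : a.1 = b.1 ∧ b.2 = a.2 + 1 then
      (vertW hS a.1 a.2).copy rfl (congrArg (phiF hS) (pext h1.1 h1.2.symm : (a.1, a.2 + 1) = b))
    else if h2 : a.1 = b.1 ∧ a.2 = b.2 + 1 then
      ((vertW hS b.1 b.2).copy rfl (congrArg (phiF hS) (pext h2.1.symm h2.2.symm : (b.1, b.2 + 1) = a))).reverse
    else if h3 : a.2 = b.2 ∧ b.1 = a.1 + 1 then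
      (horizW hS a.1 a.2 (hexAdj_par3 h h1 h2 h3)).copy rfl
        (congrArg (phiF hS) (pext h3.2.symm h3.1 : (a.1 + 1, a.2) = b))
    else
      ((horizW hS b.1 b.2 (hexAdj_case4 h h1 h2 h3).2.2).copy rfl
        (congrArg (phiF hS) (pext (hexAdj_case4 h h1 h2 h3).2.1.symm
          (hexAdj_case4 h h1 h2 h3).1.symm : (b.1 + 1, b.2) = a))).reverse

lemma Pdef_cases (hS : Supply G R idx) {a b : ℕ × ℕ} (h : hexHalfGrid.Adj a b) :
    (∃ c m, a = (c, m) ∧ b = (c, m + 1) ∧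
      ∀ v, v ∈ (Pdef hS h).support ↔ v ∈ (vertW hS c m).support) ∨
    (∃ c m, b = (c, m) ∧ a = (c, m + 1) ∧
      ∀ v, v ∈ (Pdef hS h).support ↔ v ∈ (vertW hS c m).support) ∨
    (∃ k m, (k + m) % 2 = 0 ∧ a = (k, m) ∧ b = (k + 1, m) ∧
      ∀ v, v ∈ (Pdef hS h).support ↔ v ∈ (rg hS (stg k m)).wk.support) ∨
    (∃ k m, (k + m) % 2 = 0 ∧ b = (k, m) ∧ a = (k + 1, m) ∧
      ∀ v, v ∈ (Pdef hS h).support ↔ v ∈ (rg hS (stg k m)).wk.support) := by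
  by_cases h1 : a.1 = b.1 ∧ b.2 = a.2 + 1
  · left
    refine ⟨a.1, a.2, rfl, (pext h1.1 h1.2.symm : (a.1, a.2 + 1) = b).symm, ?_⟩
    intro v
    simp only [Pdef]
    rw [dif_pos h1, SimpleGraph.Walk.support_copy]
  · by_cases h2 : a.1 = b.1 ∧ a.2 = b.2 + 1
    · right; left
      refine ⟨b.1, b.2, rfl, (pext h2.1.symm h2.2.symm : (b.1, b.2 + 1) = a).symm, ?_⟩
      intro v
      simp only [Pdef]
      rw [dif_neg h1, dif_pos h2]
      simp only [SimpleGraph.Walk.support_reverse, List.mem_reverse,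
        SimpleGraph.Walk.support_copy]
    · by_cases h3 : a.2 = b.2 ∧ b.1 = a.1 + 1
      · right; right; left
        refine ⟨a.1, a.2, hexAdj_par3 h h1 h2 h3, rfl, (pext h3.2.symm h3.1 : (a.1 + 1, a.2) = b).symm, ?_⟩
        intro v
        simp only [Pdef]
        rw [dif_neg h1, dif_neg h2, dif_pos h3, SimpleGraph.Walk.support_copy]
        exact horizW_support hS a.1 a.2 _ v
      · right; right; right
        have h4 := hexAdj_case4 h h1 h2 h3
        refine ⟨b.1, b.2, h4.2.2, rfl, (pext h4.2.1 h4.1 : a = (b.1 + 1, b.2)), ?_⟩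
        intro v
        simp only [Pdef]
        rw [dif_neg h1, dif_neg h2, dif_neg h3]
        simp only [SimpleGraph.Walk.support_reverse, List.mem_reverse,
          SimpleGraph.Walk.support_copy]
        exact horizW_support hS b.1 b.2 _ v

lemma Pdef_isPath (hS : Supply G R idx) {a b : ℕ × ℕ} (h : hexHalfGrid.Adj a b) :
    (Pdef hS h).IsPath := by
  by_cases h1 : a.1 = b.1 ∧ b.2 = a.2 + 1
  · simp only [Pdef]
    rw [dif_pos h1, SimpleGraph.Walk.isPath_copy]
    exact vertW_isPath hS a.1 a.2
  · by_cases h2 : a.1 = b.1 ∧ a.2 = b.2 + 1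
    · simp only [Pdef]
      rw [dif_neg h1, dif_pos h2, SimpleGraph.Walk.isPath_reverse_iff,
        SimpleGraph.Walk.isPath_copy]
      exact vertW_isPath hS b.1 b.2
    · by_cases h3 : a.2 = b.2 ∧ b.1 = a.1 + 1
      · simp only [Pdef]
        rw [dif_neg h1, dif_neg h2, dif_pos h3, SimpleGraph.Walk.isPath_copy]
        exact horizW_isPath hS a.1 a.2 _
      · simp only [Pdef]
        rw [dif_neg h1, dif_neg h2, dif_neg h3, SimpleGraph.Walk.isPath_reverse_iff,
          SimpleGraph.Walk.isPath_copy]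
        exact horizW_isPath hS b.1 b.2 _

end PBuild
section LemB

open SimpleGraph

variable {V : Type*} {G : SimpleGraph V} {R : ℕ → ℕ → V} {idx : ℕ → ℕ} [DecidableEq V]

theorem lemmaB (hS : Supply G R idx) :
    ∃ (φ : ℕ × ℕ → V) (P : ∀ ⦃a b : ℕ × ℕ⦄, hexHalfGrid.Adj a b → G.Walk (φ a) (φ b)),
      IsSubdivisionWith hexHalfGrid G φ P ∧
      ∀ n m : ℕ, ∀ v ∈ (P (hexVert n m)).support, v ∈ Set.range (R (idx n)) := by
  refine ⟨phiF hS, Pdef hS, ⟨phiF_inj hS, fun a b h => Pdef_isPath hS h, ?_, ?_⟩, ?_⟩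
  · -- internal vertices avoid branch vertices
    intro a b h v hv hvr
    rcases Pdef_cases hS h with ⟨c, m, ha, hb, hsup⟩ | ⟨c, m, hb, ha, hsup⟩ |
      ⟨k, m, hpar, ha, hb, hsup⟩ | ⟨k, m, hpar, hb, ha, hsup⟩
    · subst ha; subst hb
      exact coreV hS c m v ((hsup v).1 hv) hvr
    · subst ha; subst hb
      exact (coreV hS c m v ((hsup v).1 hv) hvr).symm
    · subst ha; subst hb
      obtain ⟨⟨c', m'⟩, he⟩ := hvr
      have hv' := (hsup v).1 hv
      rw [← he] at hv'
      rcases rung_branch hS k m hpar c' m' hv' with ⟨rfl, rfl⟩ | ⟨rfl, rfl⟩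
      · exact Or.inl he.symm
      · exact Or.inr he.symm
    · subst ha; subst hb
      obtain ⟨⟨c', m'⟩, he⟩ := hvr
      have hv' := (hsup v).1 hv
      rw [← he] at hv'
      rcases rung_branch hS k m hpar c' m' hv' with ⟨rfl, rfl⟩ | ⟨rfl, rfl⟩
      · exact Or.inr he.symm
      · exact Or.inl he.symm
  · -- distinct edge-paths meet only in common branch vertices
    intro a b c d h₁ h₂ hne v hv₁ hv₂
    rcases Pdef_cases hS h₁ with ⟨c1, m1, ha, hb, hs1⟩ | ⟨c1, m1, hb, ha, hs1⟩ |
      ⟨c1, m1, hp1, ha, hb, hs1⟩ | ⟨c1, m1, hp1, hb, ha, hs1⟩ <;>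
      rcases Pdef_cases hS h₂ with ⟨c2, m2, hc, hd, hs2⟩ | ⟨c2, m2, hd, hc, hs2⟩ |
        ⟨c2, m2, hp2, hc, hd, hs2⟩ | ⟨c2, m2, hp2, hd, hc, hs2⟩
    · subst ha; subst hb; subst hc; subst hd
      have hne' : (c1, m1) ≠ (c2, m2) := by
        intro hcm; injection hcm with hcc hmm; subst hcc; subst hmm; exact hne rfl
      exact coreVV hS c1 m1 c2 m2 hne' v ((hs1 v).1 hv₁) ((hs2 v).1 hv₂)
    · subst ha; subst hb; subst hc; subst hd
      have hne' : (c1, m1) ≠ (c2, m2) := by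
        intro hcm; injection hcm with hcc hmm; subst hcc; subst hmm; exact hne Sym2.eq_swap
      obtain ⟨O1, O2⟩ := coreVV hS c1 m1 c2 m2 hne' v ((hs1 v).1 hv₁) ((hs2 v).1 hv₂)
      exact ⟨O1, O2.symm⟩
    · subst ha; subst hb; subst hc; subst hd
      obtain ⟨O1, O2⟩ := coreVH hS c1 m1 c2 m2 hp2 v ((hs1 v).1 hv₁) ((hs2 v).1 hv₂)
      exact ⟨O1, O2⟩
    · subst ha; subst hb; subst hc; subst hd
      obtain ⟨O1, O2⟩ := coreVH hS c1 m1 c2 m2 hp2 v ((hs1 v).1 hv₁) ((hs2 v).1 hv₂)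
      exact ⟨O1, O2.symm⟩
    · subst ha; subst hb; subst hc; subst hd
      have hne' : (c1, m1) ≠ (c2, m2) := by
        intro hcm; injection hcm with hcc hmm; subst hcc; subst hmm; exact hne Sym2.eq_swap
      obtain ⟨O1, O2⟩ := coreVV hS c1 m1 c2 m2 hne' v ((hs1 v).1 hv₁) ((hs2 v).1 hv₂)
      exact ⟨O1.symm, O2⟩
    · subst ha; subst hb; subst hc; subst hd
      have hne' : (c1, m1) ≠ (c2, m2) := by
        intro hcm; injection hcm with hcc hmm; subst hcc; subst hmm; exact hne rfl
      obtain ⟨O1, O2⟩ := coreVV hS c1 m1 c2 m2 hne' v ((hs1 v).1 hv₁) ((hs2 v).1 hv₂)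
      exact ⟨O1.symm, O2.symm⟩
    · subst ha; subst hb; subst hc; subst hd
      obtain ⟨O1, O2⟩ := coreVH hS c1 m1 c2 m2 hp2 v ((hs1 v).1 hv₁) ((hs2 v).1 hv₂)
      exact ⟨O1.symm, O2⟩
    · subst ha; subst hb; subst hc; subst hd
      obtain ⟨O1, O2⟩ := coreVH hS c1 m1 c2 m2 hp2 v ((hs1 v).1 hv₁) ((hs2 v).1 hv₂)
      exact ⟨O1.symm, O2.symm⟩
    · subst ha; subst hb; subst hc; subst hd
      obtain ⟨O2, O1⟩ := coreVH hS c2 m2 c1 m1 hp1 v ((hs2 v).1 hv₂) ((hs1 v).1 hv₁)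
      exact ⟨O1, O2⟩
    · subst ha; subst hb; subst hc; subst hd
      obtain ⟨O2, O1⟩ := coreVH hS c2 m2 c1 m1 hp1 v ((hs2 v).1 hv₂) ((hs1 v).1 hv₁)
      exact ⟨O1, O2.symm⟩
    · subst ha; subst hb; subst hc; subst hd
      have hne' : (c1, m1) ≠ (c2, m2) := by
        intro hcm; injection hcm with hcc hmm; subst hcc; subst hmm; exact hne rfl
      exact (coreHH hS c1 m1 c2 m2 hp1 hp2 hne' v ((hs1 v).1 hv₁) ((hs2 v).1 hv₂)).elim
    · subst ha; subst hb; subst hc; subst hd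
      have hne' : (c1, m1) ≠ (c2, m2) := by
        intro hcm; injection hcm with hcc hmm; subst hcc; subst hmm; exact hne Sym2.eq_swap
      exact (coreHH hS c1 m1 c2 m2 hp1 hp2 hne' v ((hs1 v).1 hv₁) ((hs2 v).1 hv₂)).elim
    · subst ha; subst hb; subst hc; subst hd
      obtain ⟨O2, O1⟩ := coreVH hS c2 m2 c1 m1 hp1 v ((hs2 v).1 hv₂) ((hs1 v).1 hv₁)
      exact ⟨O1.symm, O2⟩
    · subst ha; subst hb; subst hc; subst hd
      obtain ⟨O2, O1⟩ := coreVH hS c2 m2 c1 m1 hp1 v ((hs2 v).1 hv₂) ((hs1 v).1 hv₁)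
      exact ⟨O1.symm, O2.symm⟩
    · subst ha; subst hb; subst hc; subst hd
      have hne' : (c1, m1) ≠ (c2, m2) := by
        intro hcm; injection hcm with hcc hmm; subst hcc; subst hmm; exact hne Sym2.eq_swap
      exact (coreHH hS c1 m1 c2 m2 hp1 hp2 hne' v ((hs1 v).1 hv₁) ((hs2 v).1 hv₂)).elim
    · subst ha; subst hb; subst hc; subst hd
      have hne' : (c1, m1) ≠ (c2, m2) := by
        intro hcm; injection hcm with hcc hmm; subst hcc; subst hmm; exact hne rfl
      exact (coreHH hS c1 m1 c2 m2 hp1 hp2 hne' v ((hs1 v).1 hv₁) ((hs2 v).1 hv₂)).elim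
  · -- vertical paths live on the rays
    intro n m v hv
    rcases Pdef_cases hS (hexVert n m) with ⟨c, m', ha, hb, hsup⟩ | ⟨c, m', hb, ha, hsup⟩ |
      ⟨k, m', hpar, ha, hb, hsup⟩ | ⟨k, m', hpar, hb, ha, hsup⟩
    · injection ha with h1 h2
      subst h1; subst h2
      obtain ⟨i, _, _, rfl⟩ := (vertW_support hS n m v).1 ((hsup v).1 hv)
      exact ⟨i, rfl⟩
    · injection ha with h1 h2
      injection hb with h3 h4
      omega
    · injection ha with h1 h2
      injection hb with h3 h4
      omega
    · injection ha with h1 h2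
      injection hb with h3 h4
      omega

end LemB
/-- **Strengthened Halin grid theorem.** For every infinite collection `𝓡` of pairwise
disjoint, pairwise equivalent rays in `G` there is a subdivision of the hexagonal
half-grid in `G` all of whose vertical rays belong to `𝓡`. -/
theorem strengthened_halin_grid {V : Type*} {ι : Type*} [Infinite ι]
    (G : SimpleGraph V) (𝓡 : ι → ℕ → V)
    (hray : ∀ i, IsRay G (𝓡 i))
    (hdisj : ∀ i j, i ≠ j → Disjoint (Set.range (𝓡 i)) (Set.range (𝓡 j)))
    (hequiv : ∀ i j, RayEquiv G (𝓡 i) (𝓡 j)) :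
    ∃ (φ : ℕ × ℕ → V) (P : ∀ ⦃a b : ℕ × ℕ⦄, hexHalfGrid.Adj a b → G.Walk (φ a) (φ b)),
      IsSubdivisionWith hexHalfGrid G φ P ∧
      ∀ n : ℕ, ∃ i : ι, ∀ m : ℕ, ∀ v ∈ (P (hexVert n m)).support, v ∈ Set.range (𝓡 i) := by
  classical
  set e := Infinite.natEmbedding ι with he
  set Rm : ℕ → ℕ → V := fun j => 𝓡 (e j) with hRm
  have hsys : RaySys G Rm := by
    refine ⟨?_, ?_, ?_, ?_⟩
    · intro m
      exact (hray (e m)).1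
    · intro m k
      exact (hray (e m)).2 k
    · intro m m' p q hpq
      by_contra hne
      have hd := hdisj (e m) (e m') (fun h => hne (e.injective h))
      exact (Set.disjoint_left.1 hd ⟨p, rfl⟩) ⟨q, hpq.symm⟩
    · intro j X hj
      obtain ⟨u, vv, p, hp, hu, hv, hdisj'⟩ := hequiv (e 0) (e j)
      obtain ⟨i, hi⟩ := exists_avoid p hdisj' X
      obtain ⟨x, hx⟩ := hu i
      obtain ⟨y, hy⟩ := hv i
      refine ⟨x, y, (p i).copy hx.symm hy.symm, ?_, ?_⟩
      · rw [SimpleGraph.Walk.isPath_copy]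
        exact hp i
      · intro z hz
        rw [SimpleGraph.Walk.support_copy] at hz
        exact hi z hz
  obtain ⟨idx, hmono, hsup⟩ := lemmaA hsys
  have hSupply : Supply G Rm idx := ⟨hmono, hsys.inj, hsys.adj, hsys.dis, hsup⟩
  obtain ⟨φ, P, hsub, hcol⟩ := lemmaB hSupply
  refine ⟨φ, P, hsub, ?_⟩
  intro n
  exact ⟨e (idx n), fun m v hv => hcol n m v hv⟩
end

section
/- Let M be an infinitely edge-connected multigraph on an infinite vertex set. Then either some vertex of M has infinitely many neighbours, or the subgraph M_∞ of edges of infinite multiplicity contains a ray in its underlying simple graph. -/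
section Aux

variable {V : Type*} (G : SimpleGraph V)

/-- The set of vertices reachable from `v` by walks avoiding `s`. -/
def avoidComp (s : Set V) (v : V) : Set V :=
  {w | ∃ p : G.Walk v w, ∀ x ∈ p.support, x ∉ s}

lemma walk_cons_exists {v w : V} (hvw : v ≠ w) (r : G.Walk v w) :
    ∃ u, ∃ h : G.Adj v u, ∃ r' : G.Walk u w, r = SimpleGraph.Walk.cons h r' := by
  cases r with
  | nil => exact absurd rfl hvw
  | cons h r' => exact ⟨_, h, r', rfl⟩

lemma avoid_step (hdeg : ∀ v : V, {w | G.Adj v w}.Finite)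
    {s : Set V} {v : V} (h : (avoidComp G s v).Infinite) :
    ∃ u, G.Adj v u ∧ u ∉ insert v s ∧ (avoidComp G (insert v s) u).Infinite := by
  classical
  by_contra hcon
  push_neg at hcon
  have hcover : avoidComp G s v ⊆
      insert v (⋃ u ∈ {u | G.Adj v u ∧ u ∉ insert v s}, avoidComp G (insert v s) u) := by
    rintro w ⟨p, hp⟩
    by_cases hwv : w = v
    · subst hwv; exact Set.mem_insert _ _
    · have hvmem : v ∈ p.reverse.support := by
        rw [SimpleGraph.Walk.support_reverse, List.mem_reverse]
        exact p.start_mem_support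
      have hcount : (p.reverse.takeUntil v hvmem).support.count v = 1 :=
        SimpleGraph.Walk.count_support_takeUntil_eq_one _ _
      have hqsub : ∀ x ∈ (p.reverse.takeUntil v hvmem).support, x ∉ s := by
        intro x hx
        have := SimpleGraph.Walk.support_takeUntil_subset _ hvmem hx
        rw [SimpleGraph.Walk.support_reverse, List.mem_reverse] at this
        exact hp x this
      set r := (p.reverse.takeUntil v hvmem).reverse with hrdef
      have hrcount : r.support.count v = 1 := by
        rw [hrdef, SimpleGraph.Walk.support_reverse, List.count_reverse]; exact hcount
      have hrsub : ∀ x ∈ r.support, x ∉ s := by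
        intro x hx
        rw [hrdef, SimpleGraph.Walk.support_reverse, List.mem_reverse] at hx
        exact hqsub x hx
      obtain ⟨u, hadj, r', hrr⟩ := walk_cons_exists G (fun h => hwv h.symm) r
      have hsupp : r.support = v :: r'.support := by
        rw [hrr, SimpleGraph.Walk.support_cons]
      have hvr' : v ∉ r'.support := by
        intro hv
        rw [hsupp, List.count_cons_self] at hrcount
        have : r'.support.count v = 0 := by omega
        exact (List.count_eq_zero.mp this) hv
      have hr'sub : ∀ x ∈ r'.support, x ∉ (insert v s : Set V) := by
        intro x hx hmem
        rcases Set.mem_insert_iff.mp hmem with h1 | h1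
        · exact hvr' (h1 ▸ hx)
        · exact hrsub x (by rw [hsupp]; exact List.mem_cons_of_mem _ hx) h1
      have hu : u ∉ (insert v s : Set V) := hr'sub u r'.start_mem_support
      exact Set.mem_insert_iff.mpr (Or.inr
        (Set.mem_biUnion (show u ∈ {u | G.Adj v u ∧ u ∉ insert v s} from ⟨hadj, hu⟩)
          ⟨r', hr'sub⟩))
  have hfin : (insert v (⋃ u ∈ {u | G.Adj v u ∧ u ∉ insert v s},
      avoidComp G (insert v s) u)).Finite := by
    apply Set.Finite.insert
    apply Set.Finite.biUnion ((hdeg v).subset (fun u hu => hu.1))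
    intro u hu
    exact hcon u hu.1 hu.2
  exact (hfin.subset hcover).not_infinite h

/-- One step of the ray construction. -/
noncomputable def rayStep (hdeg : ∀ v : V, {w | G.Adj v w}.Finite)
    (st : {p : V × Set V // p.1 ∉ p.2 ∧ (avoidComp G p.2 p.1).Infinite}) :
    {p : V × Set V // p.1 ∉ p.2 ∧ (avoidComp G p.2 p.1).Infinite} :=
  ⟨((avoid_step G hdeg st.2.2).choose, insert st.1.1 st.1.2),
    (avoid_step G hdeg st.2.2).choose_spec.2.1,
    (avoid_step G hdeg st.2.2).choose_spec.2.2⟩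

lemma rayStep_adj (hdeg : ∀ v : V, {w | G.Adj v w}.Finite)
    (st : {p : V × Set V // p.1 ∉ p.2 ∧ (avoidComp G p.2 p.1).Infinite}) :
    G.Adj st.1.1 (rayStep G hdeg st).1.1 :=
  (avoid_step G hdeg st.2.2).choose_spec.1

lemma rayStep_set (hdeg : ∀ v : V, {w | G.Adj v w}.Finite)
    (st : {p : V × Set V // p.1 ∉ p.2 ∧ (avoidComp G p.2 p.1).Infinite}) :
    (rayStep G hdeg st).1.2 = insert st.1.1 st.1.2 := rfl

/-- König-style ray extraction. -/
lemma exists_ray (hdeg : ∀ v : V, {w | G.Adj v w}.Finite)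
    (v0 : V) (h0 : (avoidComp G (∅ : Set V) v0).Infinite) :
    ∃ f : ℕ → V, IsRay G f := by
  classical
  let st0 : {p : V × Set V // p.1 ∉ p.2 ∧ (avoidComp G p.2 p.1).Infinite} :=
    ⟨(v0, ∅), Set.notMem_empty v0, h0⟩
  let g : ℕ → {p : V × Set V // p.1 ∉ p.2 ∧ (avoidComp G p.2 p.1).Infinite} :=
    fun n => (rayStep G hdeg)^[n] st0
  let f : ℕ → V := fun n => (g n).1.1
  have hg : ∀ n, g (n + 1) = rayStep G hdeg (g n) := by
    intro n
    show (rayStep G hdeg)^[n + 1] st0 = _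
    rw [Function.iterate_succ_apply']
  have hadj : ∀ n, G.Adj (f n) (f (n + 1)) := by
    intro n
    have := rayStep_adj G hdeg (g n)
    rwa [← hg n] at this
  have hset : ∀ n, (g (n + 1)).1.2 = insert (f n) (g n).1.2 := by
    intro n; rw [hg n]; rfl
  have hnot : ∀ n, f n ∉ (g n).1.2 := fun n => (g n).2.1
  have hmem : ∀ m n, m < n → f m ∈ (g n).1.2 := by
    intro m n hmn
    induction n with
    | zero => omega
    | succ n ih =>
      rw [hset n]
      rcases Nat.lt_succ_iff_lt_or_eq.mp hmn with h | h
      · exact Set.mem_insert_iff.mpr (Or.inr (ih h))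
      · exact h ▸ Set.mem_insert _ _
  refine ⟨f, ?_, hadj⟩
  intro m n hfe
  by_contra hne
  rcases Nat.lt_or_ge m n with h | h
  · exact hnot n (hfe ▸ hmem m n h)
  · have h' : n < m := lt_of_le_of_ne h (Ne.symm hne)
    exact hnot m (hfe ▸ hmem n m h')

end Aux

/-- In an infinitely edge-connected multigraph on an infinite vertex set, either some
vertex has infinitely many neighbours, or the subgraph of edges of infinite multiplicity
contains a ray. -/
theorem infinite_degree_or_ray_in_inf_subgraph {V : Type*} [Infinite V] (M : Multigraph V)
    (hconn : M.InfEdgeConn) :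
    (∃ v : V, {w : V | M.mult v w ≠ 0}.Infinite) ∨
      ∃ f : ℕ → V, IsRay M.infSubgraph f := by
  classical
  by_cases hbig : ∃ v : V, {w : V | M.mult v w ≠ 0}.Infinite
  · exact Or.inl hbig
  push_neg at hbig
  have hfin : ∀ v : V, {w : V | M.mult v w ≠ 0}.Finite :=
    fun v => hbig v
  set G := M.infSubgraph with hG
  have hadj_iff : ∀ v w, G.Adj v w ↔ v ≠ w ∧ (M.mult v w = ⊤ ∨ M.mult w v = ⊤) := by
    intro v w
    rw [hG, Multigraph.infSubgraph, SimpleGraph.fromRel_adj]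
  have hdeg : ∀ v : V, {w | G.Adj v w}.Finite := by
    intro v
    apply (hfin v).subset
    intro w hw
    rcases (hadj_iff v w).mp hw with ⟨_, h | h⟩
    · simp only [Set.mem_setOf_eq, h]; exact (by simp : (⊤ : ℕ∞) ≠ 0)
    · simp only [Set.mem_setOf_eq, M.symm v w, h]; exact (by simp : (⊤ : ℕ∞) ≠ 0)
  obtain ⟨v0⟩ : Nonempty V := inferInstance
  have h0 : (avoidComp G (∅ : Set V) v0).Infinite := by
    by_contra hC
    have hCfin : (avoidComp G (∅ : Set V) v0).Finite := Set.not_infinite.mp hC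
    have hv0 : v0 ∈ avoidComp G (∅ : Set V) v0 :=
      ⟨SimpleGraph.Walk.nil, fun x _ => Set.notMem_empty x⟩
    rcases hconn (avoidComp G (∅ : Set V) v0) ⟨v0, hv0⟩ hCfin.infinite_compl.nonempty with
      hcross | ⟨a, ha, b, hb, hab⟩
    · have hsub : {p : V × V | p.1 ∈ avoidComp G (∅ : Set V) v0 ∧
          p.2 ∉ avoidComp G (∅ : Set V) v0 ∧ M.mult p.1 p.2 ≠ 0} ⊆
          ⋃ a ∈ avoidComp G (∅ : Set V) v0, ({a} ×ˢ {w | M.mult a w ≠ 0}) := by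
        rintro ⟨x, y⟩ ⟨hx, _, hxy⟩
        exact Set.mem_biUnion hx ⟨rfl, hxy⟩
      have : (⋃ a ∈ avoidComp G (∅ : Set V) v0,
          ({a} ×ˢ {w | M.mult a w ≠ 0})).Finite :=
        Set.Finite.biUnion hCfin (fun a _ => (Set.finite_singleton a).prod (hfin a))
      exact (this.subset hsub).not_infinite hcross
    · have hne : a ≠ b := by
        rintro rfl
        rw [M.loopless a] at hab
        simp at hab
      have hGab : G.Adj a b := (hadj_iff a b).mpr ⟨hne, Or.inl hab⟩
      obtain ⟨p, hp⟩ := ha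
      have hbmem : b ∈ avoidComp G (∅ : Set V) v0 :=
        ⟨p.concat hGab, fun x _ => Set.notMem_empty x⟩
      exact hb hbmem
  exact Or.inr (exists_ray G hdeg v0 h0)
end
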